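/- arXiv:2112.07564 — 8 statements merged into one kernel-verified Lean document; each statement's English description precedes it below -/
import Mathlib

section
/- Let U be a nonempty set, J, J_R : U → ℝ, ε̄ ∈ ℝ, and suppose u* : [0,∞) → U satisfies, for every μ ≥ 0 and every u ∈ U, J(u*(μ)) + μ·J_R(u*(μ)) ≤ J(u) + μ·J_R(u). Assume the function φ(μ) := J_R(u*(μ)) is continuous on [0,∞) and the set S := { μ ≥ 0 : φ(μ) ≤ ε̄ } is nonempty, and set μ* := inf S. Then φ(μ*) ≤ ε̄, complementary slackness holds, i.e., μ*·(φ(μ*) − ε̄) = 0, and u*(μ*) is optimal for the constrained problem: J(u*(μ*)) = inf{ J(u) : u ∈ U, J_R(u) ≤ ε̄ }. -/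
/-- **Theorem 2, part 2 (Optimal Multiplier).** If `φ(μ) := J_R(u*(μ))` is continuous on
`[0, ∞)` and the set `S = {μ ≥ 0 : φ(μ) ≤ ε̄}` is nonempty, then at `μ* = inf S` the
constraint is satisfied, complementary slackness holds, and `u*(μ*)` solves the primal
(constrained) problem. -/
theorem stmt_4 {U : Type*} (J JR : U → ℝ) (ε : ℝ) (ustar : ℝ → U)
    (hmin : ∀ μ, 0 ≤ μ → ∀ u, J (ustar μ) + μ * JR (ustar μ) ≤ J u + μ * JR u)
    (φ : ℝ → ℝ) (hφ : ∀ μ, φ μ = JR (ustar μ))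
    (hcont : ContinuousOn φ (Set.Ici (0 : ℝ)))
    (S : Set ℝ) (hS : S = {μ : ℝ | 0 ≤ μ ∧ φ μ ≤ ε}) (hne : S.Nonempty)
    (μstar : ℝ) (hμstar : μstar = sInf S) :
    φ μstar ≤ ε ∧ μstar * (φ μstar - ε) = 0 ∧
    J (ustar μstar) = sInf {y : ℝ | ∃ u, JR u ≤ ε ∧ J u = y} := by
  have hbdd : BddBelow S := ⟨0, fun x hx => by rw [hS] at hx; exact hx.1⟩
  have hSclosed : IsClosed S := by
    rw [hS]
    have heq : {μ : ℝ | 0 ≤ μ ∧ φ μ ≤ ε} = Set.Ici (0:ℝ) ∩ φ ⁻¹' Set.Iic ε := by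
      ext x; simp [Set.mem_Ici, Set.mem_Iic]
    rw [heq]
    exact hcont.preimage_isClosed_of_isClosed isClosed_Ici isClosed_Iic
  have hmem : μstar ∈ S := by
    rw [hμstar]; exact hSclosed.csInf_mem hne hbdd
  have hmemS : 0 ≤ μstar ∧ φ μstar ≤ ε := by rw [hS] at hmem; exact hmem
  obtain ⟨hμ0, hφle⟩ := hmemS
  have hcs : μstar * (φ μstar - ε) = 0 := by
    rcases eq_or_lt_of_le hμ0 with h0 | hpos
    · rw [← h0]; ring
    · have heqφ : φ μstar = ε := by
        by_contra hne'
        have hlt : φ μstar < ε := lt_of_le_of_ne hφle hne'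
        have hct : ContinuousAt φ μstar :=
          hcont.continuousAt (Ici_mem_nhds hpos)
        have h1 : φ ⁻¹' Set.Iio ε ∈ nhdsWithin μstar (Set.Iio μstar) :=
          nhdsWithin_le_nhds (hct (Iio_mem_nhds hlt))
        have h2 : Set.Ioo (0:ℝ) μstar ∈ nhdsWithin μstar (Set.Iio μstar) :=
          Ioo_mem_nhdsLT_of_mem ⟨hpos, le_rfl⟩
        obtain ⟨x, hx1, hx2⟩ := Filter.nonempty_of_mem (Filter.inter_mem h1 h2)
        have hxS : x ∈ S := by
          rw [hS]; exact ⟨le_of_lt hx2.1, le_of_lt hx1⟩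
        have : μstar ≤ x := hμstar ▸ csInf_le hbdd hxS
        exact absurd hx2.2 (not_lt.mpr this)
      rw [heqφ]; ring
  refine ⟨hφle, hcs, ?_⟩
  have hfeas : JR (ustar μstar) ≤ ε := by rw [← hφ]; exact hφle
  have hmul : μstar * JR (ustar μstar) - μstar * ε = 0 := by
    rw [← mul_sub, ← hφ μstar]; exact hcs
  have hlb : ∀ y ∈ {y : ℝ | ∃ u, JR u ≤ ε ∧ J u = y}, J (ustar μstar) ≤ y := by
    rintro y ⟨u, hu, rfl⟩
    have h := hmin μstar hμ0 u
    have hle : μstar * JR u ≤ μstar * ε := mul_le_mul_of_nonneg_left hu hμ0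
    linarith
  exact le_antisymm
    (le_csInf ⟨J (ustar μstar), ustar μstar, hfeas, rfl⟩ hlb)
    (csInf_le ⟨J (ustar μstar), fun y hy => hlb y hy⟩ ⟨ustar μstar, hfeas, rfl⟩)
end

section
/- Let U be a nonempty set, J, J_R : U → ℝ, ε̄ ∈ ℝ, and suppose u* : [0,∞) → U satisfies, for every μ ≥ 0 and every u ∈ U, J(u*(μ)) + μ·J_R(u*(μ)) ≤ J(u) + μ·J_R(u). If Slater's condition holds, i.e., there exists u† ∈ U with J_R(u†) < ε̄, then there exists μ† ≥ 0 with J_R(u*(μ†)) < ε̄; in particular the set { μ ≥ 0 : J_R(u*(μ)) ≤ ε̄ } is nonempty and μ* := inf{ μ ≥ 0 : J_R(u*(μ)) ≤ ε̄ } is finite with μ* < μ†. -/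
/-- **Theorem 2, final claim (Optimal Multiplier under Slater's condition).** If there exists
`u†` with `J_R(u†) < ε̄` (Slater's condition), then there exists a multiplier `μ† ≥ 0` with
`J_R(u*(μ†)) < ε̄`; in particular the set `{μ ≥ 0 : J_R(u*(μ)) ≤ ε̄}` is nonempty and its
infimum `μ*` is finite with `μ* < μ†`. -/
theorem stmt_5 {U : Type*} (J JR : U → ℝ) (ε : ℝ) (ustar : ℝ → U)
    (hmin : ∀ μ, 0 ≤ μ → ∀ u, J (ustar μ) + μ * JR (ustar μ) ≤ J u + μ * JR u)
    (slater : ∃ udag, JR udag < ε) :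
    ∃ μdag : ℝ, 0 ≤ μdag ∧ JR (ustar μdag) < ε ∧
      ({μ : ℝ | 0 ≤ μ ∧ JR (ustar μ) ≤ ε}).Nonempty ∧
      sInf {μ : ℝ | 0 ≤ μ ∧ JR (ustar μ) ≤ ε} < μdag := by
  obtain ⟨ud, hud⟩ := slater
  set δ : ℝ := ε - JR ud with hδ
  have hδpos : 0 < δ := by simp [hδ]; linarith
  set C : ℝ := J ud - J (ustar 0) with hC
  have hC0 : 0 ≤ C := by
    have h := hmin 0 le_rfl ud
    simp at h
    simp [hC]; linarith
  have key : ∀ μ : ℝ, C / δ + 1 ≤ μ → 0 ≤ μ ∧ JR (ustar μ) < ε := by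
    intro μ hμ
    have hCδ : 0 ≤ C / δ := div_nonneg hC0 hδpos.le
    have hμpos : 0 < μ := by linarith
    have h1 := hmin μ hμpos.le ud
    have h2 := hmin 0 le_rfl (ustar μ)
    simp at h2
    have hμδ : C + δ ≤ μ * δ := by
      have := (div_le_iff₀ hδpos).mp (by linarith : C / δ ≤ μ - 1)
      nlinarith
    refine ⟨hμpos.le, ?_⟩
    nlinarith [hμpos]
  obtain ⟨hμ0, hJR0⟩ := key (C / δ + 1) le_rfl
  obtain ⟨hμ1, hJR1⟩ := key (C / δ + 2) (by linarith)
  refine ⟨C / δ + 2, hμ1, hJR1, ⟨C / δ + 1, hμ0, hJR0.le⟩, ?_⟩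
  have hbdd : BddBelow {μ : ℝ | 0 ≤ μ ∧ JR (ustar μ) ≤ ε} :=
    ⟨0, fun x hx => hx.1⟩
  have := csInf_le hbdd (⟨hμ0, hJR0.le⟩ : (C / δ + 1) ∈ {μ : ℝ | 0 ≤ μ ∧ JR (ustar μ) ≤ ε})
  linarith
end

section
/- Let A ∈ ℝ^{n×n}, B ∈ ℝ^{n×p}, R ∈ ℝ^{p×p} symmetric, V, V̄ ∈ ℝ^{n×n} symmetric with B'VB + R and B'V̄B + R invertible, and Q, Q̄ ∈ ℝ^{n×n}. Define K := −(B'VB + R)⁻¹B'VA, L := −(B'V̄B + R)⁻¹B'V̄A, V₋ := (A + BK)'V(A + BK) + Q + K'RK, and V̄₋ := (A + BL)'V̄(A + BL) + Q̄ + L'RL. Then V₋ − V̄₋ = (A + BL)'(V − V̄)(A + BK) + Q − Q̄. -/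
open Matrix

/-- **Lemma 5 (difference identity for Riccati difference equations).** One step of two Riccati
difference recursions, each in closed-loop form with its own optimal LQ gain, differ by the
product of the corresponding closed-loop matrices applied to the difference of the iterates,
plus the difference of the state penalties. -/
theorem stmt_9 {n p : ℕ}
    (A : Matrix (Fin n) (Fin n) ℝ) (B : Matrix (Fin n) (Fin p) ℝ)
    (R : Matrix (Fin p) (Fin p) ℝ) (hR : R.IsSymm)
    (V Vbar : Matrix (Fin n) (Fin n) ℝ) (hV : V.IsSymm) (hVbar : Vbar.IsSymm)
    (hinvV : IsUnit (Bᵀ * V * B + R)) (hinvVbar : IsUnit (Bᵀ * Vbar * B + R))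
    (Q Qbar : Matrix (Fin n) (Fin n) ℝ)
    (K L : Matrix (Fin p) (Fin n) ℝ)
    (hK : K = -((Bᵀ * V * B + R)⁻¹ * (Bᵀ * V * A)))
    (hL : L = -((Bᵀ * Vbar * B + R)⁻¹ * (Bᵀ * Vbar * A)))
    (Vm Vbarm : Matrix (Fin n) (Fin n) ℝ)
    (hVm : Vm = (A + B * K)ᵀ * V * (A + B * K) + Q + Kᵀ * R * K)
    (hVbarm : Vbarm = (A + B * L)ᵀ * Vbar * (A + B * L) + Qbar + Lᵀ * R * L) :
    Vm - Vbarm = (A + B * L)ᵀ * (V - Vbar) * (A + B * K) + Q - Qbar := by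
  have hdV : IsUnit (Bᵀ * V * B + R).det :=
    (Matrix.isUnit_iff_isUnit_det _).mp hinvV
  have hdVbar : IsUnit (Bᵀ * Vbar * B + R).det :=
    (Matrix.isUnit_iff_isUnit_det _).mp hinvVbar
  -- gain equation for K
  have eK : (Bᵀ * V * B + R) * K = -(Bᵀ * V * A) := by
    rw [hK, Matrix.mul_neg, ← Matrix.mul_assoc, Matrix.mul_nonsing_inv _ hdV, Matrix.one_mul]
  -- gain equation for L
  have eL : (Bᵀ * Vbar * B + R) * L = -(Bᵀ * Vbar * A) := by
    rw [hL, Matrix.mul_neg, ← Matrix.mul_assoc, Matrix.mul_nonsing_inv _ hdVbar, Matrix.one_mul]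
  -- transposed gain equation for L
  have eLT : Lᵀ * (Bᵀ * Vbar * B + R) = -(Aᵀ * Vbar * B) := by
    have h := congrArg Matrix.transpose eL
    simp only [Matrix.transpose_mul, Matrix.transpose_add, Matrix.transpose_neg,
      Matrix.transpose_transpose, hVbar.eq, hR.eq, Matrix.mul_assoc] at h ⊢
    exact h
  -- right-associated rewrite lemmas
  have t1 : Bᵀ * (V * (B * K)) = -(Bᵀ * (V * A)) - R * K := by
    have h := eK
    simp only [Matrix.add_mul, Matrix.mul_assoc] at h
    exact eq_sub_of_add_eq h
  have t2 : Bᵀ * (Vbar * (B * L)) = -(Bᵀ * (Vbar * A)) - R * L := by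
    have h := eL
    simp only [Matrix.add_mul, Matrix.mul_assoc] at h
    exact eq_sub_of_add_eq h
  have t3 : Aᵀ * (Vbar * (B * K)) = -(Lᵀ * (Bᵀ * (Vbar * (B * K)))) - Lᵀ * (R * K) := by
    have h := congrArg (fun M => M * K) eLT
    simp only [Matrix.add_mul, Matrix.mul_add, Matrix.neg_mul, Matrix.mul_assoc] at h
    have h2 := congrArg Neg.neg h
    rw [neg_neg] at h2
    rw [← h2]; abel
  have t4 : Aᵀ * (Vbar * (B * L)) = -(Lᵀ * (Bᵀ * (Vbar * (B * L)))) - Lᵀ * (R * L) := by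
    have h := congrArg (fun M => M * L) eLT
    simp only [Matrix.add_mul, Matrix.mul_add, Matrix.neg_mul, Matrix.mul_assoc] at h
    have h2 := congrArg Neg.neg h
    rw [neg_neg] at h2
    rw [← h2]; abel
  rw [hVm, hVbarm]
  simp only [Matrix.transpose_add, Matrix.transpose_mul, Matrix.sub_mul, Matrix.mul_sub,
    Matrix.add_mul, Matrix.mul_add, Matrix.mul_assoc]
  simp only [t1, t2, t3, t4, Matrix.mul_sub, Matrix.mul_neg, Matrix.mul_add]
  abel
end

section
/- Let A ∈ ℝ^{n×n}, B ∈ ℝ^{n×p}, R ∈ ℝ^{p×p} symmetric positive definite, integers t₀ < N, and symmetric positive semidefinite matrices Q_t (t₀ ≤ t ≤ N−1) and Q_∞. Let the backward Riccati recursion be: V_{N−1} := Q_{N−1}, and for t₀ < t ≤ N−1, K_t := −(B'V_tB + R)⁻¹B'V_tA and V_{t−1} := (A + BK_t)'V_t(A + BK_t) + Q_{t−1} + K_t'RK_t. Let V be a symmetric positive semidefinite solution of the DARE V = A'VA + Q_∞ − A'VB(B'VB + R)⁻¹B'VA, with gain K := −(B'VB + R)⁻¹B'VA and closed-loop matrix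 Ā := A + BK. Define the products Ψ_{k₁:k₂} := (A + BK_{k₁})(A + BK_{k₁−1})⋯(A + BK_{k₂+1}) for k₁ > k₂ and Ψ_{k:k} := I. Then for every t₀ ≤ t ≤ N−1: V_t − V = (Ā')^{N−t−1}(Q_{N−1} − V)·Ψ_{N−1:t} + Σ_{k=0}^{N−t−2} (Ā')^{k}(Q_{t+k} − Q_∞)·Ψ_{t+k:t}. -/
open Matrix

lemma riccati_diff {n p : ℕ} (A : Matrix (Fin n) (Fin n) ℝ) (B : Matrix (Fin n) (Fin p) ℝ)
    (R : Matrix (Fin p) (Fin p) ℝ)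
    (Vt Vd Vprev Qprev Qinf : Matrix (Fin n) (Fin n) ℝ) (Kt Kd : Matrix (Fin p) (Fin n) ℝ)
    (e1 : Bᵀ * Vt * (A + B * Kt) = -(R * Kt))
    (e2 : (A + B * Kd)ᵀ * Vd * B = -(Kdᵀ * R))
    (e3 : Vd = (A + B * Kd)ᵀ * Vd * (A + B * Kd) + Qinf + Kdᵀ * R * Kd)
    (e4 : Vprev = (A + B * Kt)ᵀ * Vt * (A + B * Kt) + Qprev + Ktᵀ * R * Kt) :
    Vprev - Vd = (A + B * Kd)ᵀ * (Vt - Vd) * (A + B * Kt) + (Qprev - Qinf) := by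
  rw [← sub_eq_zero]
  calc Vprev - Vd - ((A + B * Kd)ᵀ * (Vt - Vd) * (A + B * Kt) + (Qprev - Qinf))
      = (Vprev - ((A + B * Kt)ᵀ * Vt * (A + B * Kt) + Qprev + Ktᵀ * R * Kt))
        - (Vd - ((A + B * Kd)ᵀ * Vd * (A + B * Kd) + Qinf + Kdᵀ * R * Kd))
        + ((Kt - Kd)ᵀ * (Bᵀ * Vt * (A + B * Kt)) - (Kt - Kd)ᵀ * (-(R * Kt)))
        - (((A + B * Kd)ᵀ * Vd * B) * (Kd - Kt) - (-(Kdᵀ * R)) * (Kd - Kt)) := by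
        simp only [Matrix.transpose_add, Matrix.transpose_mul, Matrix.transpose_sub,
          Matrix.mul_add, Matrix.add_mul, Matrix.mul_sub, Matrix.sub_mul,
          Matrix.neg_mul, Matrix.mul_neg, Matrix.mul_assoc]
        abel
    _ = 0 := by rw [← e4, ← e3, e1, e2]; simp

lemma gain_eq {n p : ℕ} (A W : Matrix (Fin n) (Fin n) ℝ) (B : Matrix (Fin n) (Fin p) ℝ)
    (R : Matrix (Fin p) (Fin p) ℝ) (hR : R.PosDef) (hW : W.PosSemidef)
    (Kt : Matrix (Fin p) (Fin n) ℝ) (hKt : Kt = -((Bᵀ * W * B + R)⁻¹ * (Bᵀ * W * A))) :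
    Bᵀ * W * (A + B * Kt) = -(R * Kt) := by
  have hpsd : (Bᵀ * W * B).PosSemidef := by
    have := hW.conjTranspose_mul_mul_same B
    simpa using this
  have hM : (Bᵀ * W * B + R).PosDef := Matrix.PosDef.posSemidef_add hpsd hR
  have hdet : IsUnit (Bᵀ * W * B + R).det := hM.det_pos.ne'.isUnit
  have hMK : (Bᵀ * W * B + R) * Kt = -(Bᵀ * W * A) := by
    rw [hKt, Matrix.mul_neg, ← Matrix.mul_assoc, Matrix.mul_nonsing_inv _ hdet, Matrix.one_mul]
  calc Bᵀ * W * (A + B * Kt)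
      = Bᵀ * W * A + ((Bᵀ * W * B + R) * Kt) - R * Kt := by
        simp only [Matrix.mul_add, Matrix.add_mul, Matrix.mul_assoc]; abel
    _ = -(R * Kt) := by rw [hMK]; abel

set_option maxHeartbeats 4000000 in
/-- **Fundamental identity (eq. (55)) in the proof of Theorem 7.** Iterating the
Riccati-difference identity of Lemma 5 expresses the deviation of a time-varying backward
Riccati recursion from a DARE solution in terms of closed-loop transition products. -/
theorem stmt_10 {n p : ℕ}
    (A : Matrix (Fin n) (Fin n) ℝ) (B : Matrix (Fin n) (Fin p) ℝ)
    (R : Matrix (Fin p) (Fin p) ℝ) (hR : R.PosDef)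
    (t₀ N : ℤ) (ht₀N : t₀ < N)
    (Q : ℤ → Matrix (Fin n) (Fin n) ℝ)
    (hQ : ∀ t, t₀ ≤ t → t ≤ N - 1 → (Q t).PosSemidef)
    (Qinf : Matrix (Fin n) (Fin n) ℝ) (hQinf : Qinf.PosSemidef)
    -- backward Riccati recursion
    (V : ℤ → Matrix (Fin n) (Fin n) ℝ) (K : ℤ → Matrix (Fin p) (Fin n) ℝ)
    (hVN : V (N - 1) = Q (N - 1))
    (hK : ∀ t, t₀ < t → t ≤ N - 1 → K t = -((Bᵀ * V t * B + R)⁻¹ * (Bᵀ * V t * A)))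
    (hV : ∀ t, t₀ < t → t ≤ N - 1 →
      V (t - 1) = (A + B * K t)ᵀ * V t * (A + B * K t) + Q (t - 1) + (K t)ᵀ * R * K t)
    -- DARE solution, its gain and closed-loop matrix
    (Vd : Matrix (Fin n) (Fin n) ℝ) (hVdsymm : Vd.PosSemidef)
    (hDARE : Vd = Aᵀ * Vd * A + Qinf - Aᵀ * Vd * B * (Bᵀ * Vd * B + R)⁻¹ * (Bᵀ * Vd * A))
    (Kd : Matrix (Fin p) (Fin n) ℝ) (hKd : Kd = -((Bᵀ * Vd * B + R)⁻¹ * (Bᵀ * Vd * A)))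
    (Abar : Matrix (Fin n) (Fin n) ℝ) (hAbar : Abar = A + B * Kd)
    -- closed-loop transition products
    (Ψ : ℤ → ℤ → Matrix (Fin n) (Fin n) ℝ)
    (hΨdiag : ∀ k, Ψ k k = 1)
    (hΨ : ∀ k₁ k₂, t₀ ≤ k₂ → k₂ ≤ k₁ → k₁ ≤ N - 2 →
      Ψ (k₁ + 1) k₂ = (A + B * K (k₁ + 1)) * Ψ k₁ k₂) :
    ∀ t, t₀ ≤ t → t ≤ N - 1 →
      V t - Vd = Abarᵀ ^ (N - t - 1).toNat * (Q (N - 1) - Vd) * Ψ (N - 1) t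
        + ∑ k ∈ Finset.range (N - t - 1).toNat,
            Abarᵀ ^ k * (Q (t + (k : ℤ)) - Qinf) * Ψ (t + (k : ℤ)) t := by
  have hRsymm : Rᵀ = R := by
    rw [← conjTranspose_eq_transpose_of_trivial]; exact hR.1
  have hVdT : Vdᵀ = Vd := by
    rw [← conjTranspose_eq_transpose_of_trivial]; exact hVdsymm.1
  -- V t is PosSemidef on the relevant range (downward induction)
  have hVpsd : ∀ m : ℕ, ∀ t : ℤ, t = N - 1 - (m : ℤ) → t₀ ≤ t → (V t).PosSemidef := by
    intro m
    induction m with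
    | zero => intro t ht _; have : t = N - 1 := by omega
              subst this; rw [hVN]; exact hQ _ (by omega) (by omega)
    | succ m ih =>
        intro t ht htl
        have hprev : (V (t + 1)).PosSemidef := ih (t + 1) (by push_cast; push_cast at ht; omega) (by omega)
        have hVt : V t = (A + B * K (t+1))ᵀ * V (t+1) * (A + B * K (t+1)) + Q t
            + (K (t+1))ᵀ * R * K (t+1) := by
          have := hV (t + 1) (by omega) (by push_cast at ht; omega)
          simpa using this
        rw [hVt]
        refine Matrix.PosSemidef.add (Matrix.PosSemidef.add ?_ (hQ t (by omega) (by push_cast at ht; omega))) ?_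
        · have := hprev.conjTranspose_mul_mul_same (A + B * K (t+1))
          simpa using this
        · have := hR.posSemidef.conjTranspose_mul_mul_same (K (t+1))
          simpa using this
  -- Riccati difference step (Lemma 5)
  have step : ∀ t : ℤ, t₀ < t → t ≤ N - 1 →
      V (t - 1) - Vd = Abarᵀ * (V t - Vd) * (A + B * K t) + (Q (t - 1) - Qinf) := by
    intro t ht1 ht2
    have hVt : (V t).PosSemidef :=
      hVpsd (N - 1 - t).toNat t (by omega) (by omega)
    have e1 : Bᵀ * V t * (A + B * K t) = -(R * K t) :=
      gain_eq A (V t) B R hR hVt (K t) (hK t ht1 ht2)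
    have e2' : Bᵀ * Vd * (A + B * Kd) = -(R * Kd) :=
      gain_eq A Vd B R hR hVdsymm Kd hKd
    have e2 : (A + B * Kd)ᵀ * Vd * B = -(Kdᵀ * R) := by
      have h := congrArg Matrix.transpose e2'
      simpa [Matrix.transpose_mul, Matrix.transpose_add, Matrix.mul_assoc, hVdT, hRsymm] using h
    have hpsd : (Bᵀ * Vd * B).PosSemidef := by
      have := hVdsymm.conjTranspose_mul_mul_same B
      simpa using this
    have hM : (Bᵀ * Vd * B + R).PosDef := Matrix.PosDef.posSemidef_add hpsd hR
    have hdet : IsUnit (Bᵀ * Vd * B + R).det := hM.det_pos.ne'.isUnit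
    have hMKd : (Bᵀ * Vd * B + R) * Kd = -(Bᵀ * Vd * A) := by
      rw [hKd, Matrix.mul_neg, ← Matrix.mul_assoc, Matrix.mul_nonsing_inv _ hdet, Matrix.one_mul]
    have h1 : (Bᵀ * Vd * B + R)⁻¹ * (Bᵀ * Vd * A) = -Kd := by rw [hKd, neg_neg]
    have e3 : Vd = (A + B * Kd)ᵀ * Vd * (A + B * Kd) + Qinf + Kdᵀ * R * Kd := by
      conv_lhs => rw [hDARE]
      rw [Matrix.mul_assoc (Aᵀ * Vd * B), h1]
      calc Aᵀ * Vd * A + Qinf - Aᵀ * Vd * B * -Kd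
          = (A + B * Kd)ᵀ * Vd * (A + B * Kd) + Qinf + Kdᵀ * R * Kd
            - Kdᵀ * ((Bᵀ * Vd * B + R) * Kd + Bᵀ * Vd * A) := by
            simp only [Matrix.transpose_add, Matrix.transpose_mul,
              Matrix.mul_add, Matrix.add_mul, Matrix.neg_mul, Matrix.mul_neg, Matrix.mul_assoc]
            abel
        _ = (A + B * Kd)ᵀ * Vd * (A + B * Kd) + Qinf + Kdᵀ * R * Kd := by
            rw [hMKd]; simp
    rw [hAbar]
    exact riccati_diff A B R (V t) Vd (V (t-1)) (Q (t-1)) Qinf (K t) Kd e1 e2 e3 (hV t ht1 ht2)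
  -- Ψ step lemma
  have hΨstep : ∀ t : ℤ, t₀ < t → ∀ j : ℤ, t ≤ j → j ≤ N - 1 →
      Ψ j (t - 1) = Ψ j t * (A + B * K t) := by
    intro t ht
    refine Int.le_induction ?_ ?_
    · intro hle
      have h := hΨ (t - 1) (t - 1) (by omega) le_rfl (by omega)
      rw [sub_add_cancel] at h
      rw [h, hΨdiag, hΨdiag, Matrix.mul_one, Matrix.one_mul]
    · intro j hj ihj hle
      rw [hΨ j (t - 1) (by omega) (by omega) (by omega), ihj (by omega),
        hΨ j t (by omega) (by omega) (by omega), Matrix.mul_assoc]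
  -- main downward induction
  have main : ∀ m : ℕ, ∀ t : ℤ, t₀ ≤ t → t = N - 1 - (m : ℤ) →
      V t - Vd = Abarᵀ ^ (N - t - 1).toNat * (Q (N - 1) - Vd) * Ψ (N - 1) t
        + ∑ k ∈ Finset.range (N - t - 1).toNat,
            Abarᵀ ^ k * (Q (t + (k : ℤ)) - Qinf) * Ψ (t + (k : ℤ)) t := by
    intro m
    induction m with
    | zero =>
        intro t _ ht
        have : t = N - 1 := by omega
        subst this
        have h0 : (N - (N - 1) - 1).toNat = 0 := by omega
        rw [h0, pow_zero, hΨdiag, Matrix.one_mul, Matrix.mul_one, Finset.sum_range_zero,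
          add_zero, hVN]
    | succ m ih =>
        intro t htl ht
        have hm' : (m : ℤ) < N - 1 - t₀ := by push_cast at ht ⊢; omega
        have ih' := ih (t + 1) (by omega) (by push_cast at ht ⊢; omega)
        have hstep := step (t + 1) (by omega) (by push_cast at ht; omega)
        rw [add_sub_cancel_right, ih'] at hstep
        have hm : (N - (t + 1) - 1).toNat = m := by push_cast at ht; omega
        have hm1 : (N - t - 1).toNat = m + 1 := by push_cast at ht; omega
        rw [hm] at hstep
        rw [hm1, hstep]
        rw [Finset.sum_range_succ']
        have hψhead : Ψ (N - 1) t = Ψ (N - 1) (t + 1) * (A + B * K (t + 1)) := by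
          have := hΨstep (t + 1) (by omega) (N - 1) (by push_cast at ht; omega) le_rfl
          rw [add_sub_cancel_right] at this
          exact this
        have hterm0 : Abarᵀ ^ (0:ℕ) * (Q (t + ((0:ℕ):ℤ)) - Qinf) * Ψ (t + ((0:ℕ):ℤ)) t
            = Q t - Qinf := by
          rw [Nat.cast_zero, add_zero, pow_zero, hΨdiag, Matrix.one_mul, Matrix.mul_one]
        rw [hterm0, hψhead]
        have hsum : ∑ k ∈ Finset.range m,
              Abarᵀ ^ (k + 1) * (Q (t + ((k+1 : ℕ) : ℤ)) - Qinf) * Ψ (t + ((k+1 : ℕ) : ℤ)) t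
            = ∑ k ∈ Finset.range m,
              Abarᵀ * (Abarᵀ ^ k * (Q (t + 1 + (k : ℤ)) - Qinf) * Ψ (t + 1 + (k : ℤ)) (t + 1))
                * (A + B * K (t + 1)) := by
          refine Finset.sum_congr rfl ?_
          intro k hk
          rw [Finset.mem_range] at hk
          have hc : t + ((k + 1 : ℕ) : ℤ) = t + 1 + (k : ℤ) := by push_cast; omega
          have hψ : Ψ (t + 1 + (k : ℤ)) t = Ψ (t + 1 + (k : ℤ)) (t + 1) * (A + B * K (t + 1)) := by
            have := hΨstep (t + 1) (by omega) (t + 1 + (k : ℤ)) (by omega)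
              (by push_cast at ht; omega)
            rw [add_sub_cancel_right] at this
            exact this
          rw [hc, hψ, pow_succ']
          simp only [Matrix.mul_assoc]
        rw [hsum]
        rw [pow_succ']
        simp only [Finset.mul_sum, Finset.sum_mul, Matrix.mul_add, Matrix.add_mul,
          Matrix.mul_assoc, Finset.sum_add_distrib]
        abel
  intro t htl htu
  exact main (N - 1 - t).toNat t htl (by omega)
end

section
/- Let A ∈ ℝ^{n×n}, B ∈ ℝ^{n×p}, R ∈ ℝ^{p×p} symmetric positive definite, Q ∈ ℝ^{n×n} symmetric positive definite, integers t₀ < N, and symmetric matrices Q_t (t₀ ≤ t ≤ N−1) and Q_∞ with Q ⪯ Q_t ⪯ Q_∞ for all t. Let V_t, K_t, Ψ_{k₁:k₂} be given by the backward Riccati recursion V_{N−1} = Q_{N−1}, K_t = −(B'V_tB + R)⁻¹B'V_tA, V_{t−1} = (A + BK_t)'V_t(A + BK_t) + Q_{t−1} + K_t'RK_t, Ψ_{k₁:k₂} = (A + BK_{k₁})⋯(A + BK_{k₂+1}), Ψ_{k:k} = I, and let V be a symmetric positive semidefinite solution of the DARE V = A'VA + Q_∞ − A'VB(B'VB + R)⁻¹B'VA.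 Then for all k₁ ≥ k₂ ≥ t₀ with N−1 ≥ k₁: ‖Ψ_{k₁:k₂}‖₂ ≤ √( λ_min(Q)⁻¹ · ‖V‖₂ ). -/
/-!
The Riccati map `P ↦ min_K (A + BK)ᵀ P (A + BK) + Kᵀ R K` (the minimum being attained at the
optimal gain, by completing the square) is monotone in the Loewner order. Backward induction
from `V_{N-1} = Q_{N-1} ⪯ Q_∞ ⪯ V` therefore sandwiches `Q_t ⪯ V_t ⪯ V` along the horizon. The
recursion also gives the Lyapunov inequality `(A + BK_t)ᵀ V_t (A + BK_t) ⪯ V_{t-1}`, so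
`Ψᵀ V_{k₁} Ψ ⪯ V_{k₂}` for `Ψ = Ψ_{k₁:k₂}`. Altogether
`λ_min(Q) ΨᵀΨ ⪯ Ψᵀ Q Ψ ⪯ Ψᵀ V_{k₁} Ψ ⪯ V_{k₂} ⪯ V`, and `‖Ψ‖² = ‖ΨᵀΨ‖ ≤ ‖V‖ / λ_min(Q)`.
-/

open Matrix
open scoped Matrix.Norms.L2Operator MatrixOrder

namespace Matrix

theorem transpose_mul_mul_le_transpose_mul_mul {m n : Type*} [Fintype m] [Fintype n]
    {X Y : Matrix m m ℝ} (h : X ≤ Y) (C : Matrix m n ℝ) : Cᵀ * X * C ≤ Cᵀ * Y * C := by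
  rw [le_iff, ← Matrix.sub_mul, ← Matrix.mul_sub, ← conjTranspose_eq_transpose_of_trivial]
  exact (le_iff.mp h).conjTranspose_mul_mul_same C

theorem transpose_mul_mul_nonneg {m n : Type*} [Fintype m] [Fintype n]
    {X : Matrix m m ℝ} (h : 0 ≤ X) (C : Matrix m n ℝ) : 0 ≤ Cᵀ * X * C := by
  simpa using transpose_mul_mul_le_transpose_mul_mul h C

theorem transpose_eq_self_of_nonneg {m : Type*} {X : Matrix m m ℝ} (h : 0 ≤ X) : Xᵀ = X := by
  simpa [conjTranspose_eq_transpose_of_trivial] using h.posSemidef.isHermitian.eq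

theorem complete_square {m n : Type*} [Fintype n] [DecidableEq n] {S : Matrix n n ℝ}
    (hS : IsUnit S) (hSt : Sᵀ = S) (X : Matrix m m ℝ) (M K : Matrix n m ℝ) :
    X + Mᵀ * K + Kᵀ * M + Kᵀ * S * K =
      X - Mᵀ * S⁻¹ * M + (K + S⁻¹ * M)ᵀ * S * (K + S⁻¹ * M) := by
  have hSinv : (S⁻¹)ᵀ = S⁻¹ := by rw [transpose_nonsing_inv, hSt]
  have hdet := (isUnit_iff_isUnit_det S).mp hS
  simp only [transpose_add, transpose_mul, hSinv, Matrix.add_mul, Matrix.mul_add, Matrix.mul_assoc]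
  simp only [← Matrix.mul_assoc S, ← Matrix.mul_assoc S⁻¹, mul_nonsing_inv S hdet,
    nonsing_inv_mul S hdet, Matrix.one_mul]
  abel

theorem IsHermitian.algebraMap_sInf_spectrum_le {𝕜 m : Type*} [RCLike 𝕜] [Fintype m]
    [DecidableEq m] {Q : Matrix m m 𝕜} (hQ : Q.IsHermitian) :
    algebraMap ℝ _ (sInf (spectrum ℝ Q)) ≤ Q :=
  algebraMap_le_of_le_spectrum (fun _ hx => csInf_le Q.finite_real_spectrum.bddBelow hx)
    hQ.isSelfAdjoint

theorem IsHermitian.sInf_spectrum_smul_transpose_mul_le {m n : Type*} [Fintype m] [Fintype n]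
    [DecidableEq m] {Q : Matrix m m ℝ} (hQ : Q.IsHermitian) (X : Matrix m n ℝ) :
    sInf (spectrum ℝ Q) • (Xᵀ * X) ≤ Xᵀ * Q * X := by
  simpa [Algebra.algebraMap_eq_smul_one] using
    transpose_mul_mul_le_transpose_mul_mul hQ.algebraMap_sInf_spectrum_le X

open scoped ComplexOrder in
theorem PosDef.sInf_spectrum_pos {𝕜 m : Type*} [RCLike 𝕜] [Fintype m] [DecidableEq m]
    [Nonempty m] {Q : Matrix m m 𝕜} (hQ : Q.PosDef) : 0 < sInf (spectrum ℝ Q) :=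
  hQ.isStrictlyPositive.spectrum_pos <|
    (ContinuousFunctionalCalculus.spectrum_nonempty Q hQ.isHermitian.isSelfAdjoint).csInf_mem
      Q.finite_real_spectrum

open scoped RealInnerProductSpace in
theorem norm_le_sqrt_of_smul_transpose_mul_le {m : Type*} [Fintype m] [DecidableEq m]
    {X W : Matrix m m ℝ} {c : ℝ} (hc : 0 < c) (h : c • (Xᵀ * X) ≤ W) :
    ‖X‖ ≤ √(c⁻¹ * ‖W‖) := by
  set T := toEuclideanCLM (n := m) (𝕜 := ℝ) with hT
  rw [cstar_norm_def]
  refine ContinuousLinearMap.opNorm_le_bound _ (Real.sqrt_nonneg _) fun x => ?_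
  have hgram : ⟪x, T (Xᵀ * X) x⟫ = ‖T X x‖ ^ 2 := by
    rw [← conjTranspose_eq_transpose_of_trivial, ← star_eq_conjTranspose, map_mul, map_star,
      ContinuousLinearMap.star_eq_adjoint, mul_apply_eq_comp,
      ContinuousLinearMap.adjoint_inner_right, real_inner_self_eq_norm_sq]
  have hW : ⟪x, T W x⟫ ≤ ‖W‖ * ‖x‖ ^ 2 := calc
    ⟪x, T W x⟫ ≤ ‖x‖ * ‖T W x‖ := real_inner_le_norm _ _
    _ ≤ ‖x‖ * (‖W‖ * ‖x‖) := by gcongr; exact (T W).le_opNorm x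
    _ = ‖W‖ * ‖x‖ ^ 2 := by ring
  have hpsd : 0 ≤ ⟪x, T (W - c • (Xᵀ * X)) x⟫ := by
    simpa only [hT, inner_toEuclideanCLM, star_trivial] using
      (le_iff.mp h).dotProduct_mulVec_nonneg x.ofLp
  rw [map_sub, map_smul, _root_.sub_apply, _root_.smul_apply, inner_sub_right,
    real_inner_smul_right, hgram] at hpsd
  have hsq : ‖T X x‖ ^ 2 ≤ (√(c⁻¹ * ‖W‖) * ‖x‖) ^ 2 := by
    rw [mul_pow, Real.sq_sqrt (by positivity), inv_mul_eq_div, div_mul_eq_mul_div,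
      le_div_iff₀ hc]
    linarith
  exact (pow_le_pow_iff_left₀ (norm_nonneg _) (by positivity) two_ne_zero).mp hsq

end Matrix

noncomputable section

namespace LQR

variable {n p : Type*} [Fintype n] [Fintype p]

section closedLoopCost

variable (A : Matrix n n ℝ) (B : Matrix n p ℝ) (R : Matrix p p ℝ)

def closedLoopCost (P : Matrix n n ℝ) (K : Matrix p n ℝ) : Matrix n n ℝ :=
  (A + B * K)ᵀ * P * (A + B * K) + Kᵀ * R * K

variable {A B R}

theorem closedLoopCost_eq {P : Matrix n n ℝ} (hP : Pᵀ = P) (K : Matrix p n ℝ) :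
    closedLoopCost A B R P K =
      Aᵀ * P * A + (Bᵀ * P * A)ᵀ * K + Kᵀ * (Bᵀ * P * A) + Kᵀ * (Bᵀ * P * B + R) * K := by
  simp only [closedLoopCost, transpose_add, transpose_mul, transpose_transpose, hP,
    Matrix.add_mul, Matrix.mul_add, Matrix.mul_assoc]
  abel

theorem closedLoopCost_nonneg (hR : 0 ≤ R) {P : Matrix n n ℝ} (hP : 0 ≤ P) (K : Matrix p n ℝ) :
    0 ≤ closedLoopCost A B R P K :=
  add_nonneg (transpose_mul_mul_nonneg hP _) (transpose_mul_mul_nonneg hR _)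

theorem transpose_mul_mul_le_closedLoopCost_add (hR : 0 ≤ R) {Q : Matrix n n ℝ} (hQ : 0 ≤ Q)
    (P : Matrix n n ℝ) (K : Matrix p n ℝ) :
    (A + B * K)ᵀ * P * (A + B * K) ≤ closedLoopCost A B R P K + Q :=
  le_add_of_le_of_nonneg (le_add_of_nonneg_right (transpose_mul_mul_nonneg hR _)) hQ

theorem closedLoopCost_mono {P P' : Matrix n n ℝ} (h : P ≤ P') (K : Matrix p n ℝ) :
    closedLoopCost A B R P K ≤ closedLoopCost A B R P' K :=
  add_le_add_left (transpose_mul_mul_le_transpose_mul_mul h _) _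

theorem posDef_transpose_mul_mul_add (hR : R.PosDef) {P : Matrix n n ℝ} (hP : 0 ≤ P) :
    (Bᵀ * P * B + R).PosDef :=
  PosDef.posSemidef_add (transpose_mul_mul_nonneg hP B).posSemidef hR

end closedLoopCost

section riccatiMap

variable [DecidableEq p] (A : Matrix n n ℝ) (B : Matrix n p ℝ) (R : Matrix p p ℝ)

def optimalGain (P : Matrix n n ℝ) : Matrix p n ℝ :=
  -((Bᵀ * P * B + R)⁻¹ * (Bᵀ * P * A))

def riccatiMap (P : Matrix n n ℝ) : Matrix n n ℝ :=
  closedLoopCost A B R P (optimalGain A B R P)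

variable {A B R}

theorem closedLoopCost_eq_sub_add (hR : R.PosDef) {P : Matrix n n ℝ} (hP : 0 ≤ P)
    (K : Matrix p n ℝ) :
    closedLoopCost A B R P K =
      Aᵀ * P * A - Aᵀ * P * B * (Bᵀ * P * B + R)⁻¹ * (Bᵀ * P * A) +
        (K - optimalGain A B R P)ᵀ * (Bᵀ * P * B + R) * (K - optimalGain A B R P) := by
  have hS := posDef_transpose_mul_mul_add (B := B) hR hP
  have hPt := transpose_eq_self_of_nonneg hP
  rw [closedLoopCost_eq hPt,
    complete_square hS.isUnit (transpose_eq_self_of_nonneg hS.posSemidef.nonneg),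
    optimalGain, sub_neg_eq_add]
  simp only [transpose_mul, transpose_transpose, hPt, Matrix.mul_assoc]

theorem riccatiMap_eq (hR : R.PosDef) {P : Matrix n n ℝ} (hP : 0 ≤ P) :
    riccatiMap A B R P = Aᵀ * P * A - Aᵀ * P * B * (Bᵀ * P * B + R)⁻¹ * (Bᵀ * P * A) := by
  rw [riccatiMap, closedLoopCost_eq_sub_add hR hP, sub_self]
  simp

theorem riccatiMap_le_closedLoopCost (hR : R.PosDef) {P : Matrix n n ℝ} (hP : 0 ≤ P)
    (K : Matrix p n ℝ) : riccatiMap A B R P ≤ closedLoopCost A B R P K := by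
  rw [closedLoopCost_eq_sub_add hR hP, ← riccatiMap_eq hR hP]
  exact le_add_of_nonneg_right <|
    transpose_mul_mul_nonneg (posDef_transpose_mul_mul_add hR hP).posSemidef.nonneg _

theorem riccatiMap_nonneg (hR : R.PosDef) {P : Matrix n n ℝ} (hP : 0 ≤ P) :
    0 ≤ riccatiMap A B R P :=
  closedLoopCost_nonneg hR.posSemidef.nonneg hP _

theorem riccatiMap_mono (hR : R.PosDef) {P P' : Matrix n n ℝ} (hP : 0 ≤ P) (h : P ≤ P') :
    riccatiMap A B R P ≤ riccatiMap A B R P' :=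
  (riccatiMap_le_closedLoopCost hR hP _).trans (closedLoopCost_mono h _)

theorem riccati_le_dare (hR : R.PosDef) {t₀ T : ℤ} {Q V : ℤ → Matrix n n ℝ}
    {Qinf Vd : Matrix n n ℝ} (hQ : ∀ t, t₀ ≤ t → t ≤ T → 0 ≤ Q t)
    (hQinf : ∀ t, t₀ ≤ t → t ≤ T → Q t ≤ Qinf) (hVT : V T = Q T)
    (hV : ∀ t, t₀ < t → t ≤ T → V (t - 1) = riccatiMap A B R (V t) + Q (t - 1))
    (hVd : Vd = riccatiMap A B R Vd + Qinf) (hVd₀ : 0 ≤ Vd) :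
    ∀ t, t₀ ≤ t → t ≤ T → Q t ≤ V t ∧ V t ≤ Vd := by
  have hQinfVd : Qinf ≤ Vd := by
    rw [hVd]
    exact le_add_of_nonneg_left (riccatiMap_nonneg hR hVd₀)
  intro t ht₀ htT
  induction t, htT using Int.leInductionDown with
  | base => exact ⟨hVT ▸ le_rfl, hVT ▸ (hQinf T ht₀ le_rfl).trans hQinfVd⟩
  | pred t htT ih =>
    obtain ⟨hQV, hVVd⟩ := ih (by omega)
    have hV₀ : 0 ≤ V t := (hQ t (by omega) htT).trans hQV
    rw [hV t (by omega) htT]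
    refine ⟨le_add_of_nonneg_left (riccatiMap_nonneg hR hV₀), ?_⟩
    rw [hVd]
    exact add_le_add (riccatiMap_mono hR hV₀ hVVd) (hQinf _ ht₀ (by omega))

end riccatiMap

theorem transpose_mul_mul_transition_le [DecidableEq n] {t₀ T : ℤ} {F P : ℤ → Matrix n n ℝ}
    {Ψ : ℤ → ℤ → Matrix n n ℝ} (hF : ∀ k, t₀ < k → k ≤ T → (F k)ᵀ * P k * F k ≤ P (k - 1))
    (hΨdiag : ∀ k, Ψ k k = 1)
    (hΨ : ∀ k₁ k₂, t₀ ≤ k₂ → k₂ ≤ k₁ → k₁ < T → Ψ (k₁ + 1) k₂ = F (k₁ + 1) * Ψ k₁ k₂) :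
    ∀ k₁ k₂, t₀ ≤ k₂ → k₂ ≤ k₁ → k₁ ≤ T → (Ψ k₁ k₂)ᵀ * P k₁ * Ψ k₁ k₂ ≤ P k₂ := by
  intro k₁ k₂ hk₂ hk₁₂ hk₁T
  induction k₁, hk₁₂ using Int.leInduction with
  | base => simp [hΨdiag]
  | succ k hk ih =>
    have hstep := hF (k + 1) (by omega) hk₁T
    rw [add_sub_cancel_right] at hstep
    calc (Ψ (k + 1) k₂)ᵀ * P (k + 1) * Ψ (k + 1) k₂
        = (Ψ k k₂)ᵀ * ((F (k + 1))ᵀ * P (k + 1) * F (k + 1)) * Ψ k k₂ := by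
          rw [hΨ k k₂ hk₂ hk (by omega)]
          simp only [transpose_mul, Matrix.mul_assoc]
      _ ≤ (Ψ k k₂)ᵀ * P k * Ψ k k₂ := transpose_mul_mul_le_transpose_mul_mul hstep _
      _ ≤ P k₂ := ih (by omega)

end LQR

end

open LQR

theorem stmt_11_general {n p : ℕ}
    (A : Matrix (Fin n) (Fin n) ℝ) (B : Matrix (Fin n) (Fin p) ℝ)
    (R : Matrix (Fin p) (Fin p) ℝ) (hR : R.PosDef)
    (Qlow : Matrix (Fin n) (Fin n) ℝ) (hQlow : Qlow.PosDef)
    (t₀ N : ℤ)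
    (Q : ℤ → Matrix (Fin n) (Fin n) ℝ)
    (Qinf : Matrix (Fin n) (Fin n) ℝ)
    (hQlowLe : ∀ t, t₀ ≤ t → t ≤ N - 1 → (Q t - Qlow).PosSemidef)
    (hQle : ∀ t, t₀ ≤ t → t ≤ N - 1 → (Qinf - Q t).PosSemidef)
    -- backward Riccati recursion (closed-loop form with optimal gains)
    (V : ℤ → Matrix (Fin n) (Fin n) ℝ) (K : ℤ → Matrix (Fin p) (Fin n) ℝ)
    (hVN : V (N - 1) = Q (N - 1))
    (hK : ∀ t, t₀ < t → t ≤ N - 1 → K t = -((Bᵀ * V t * B + R)⁻¹ * (Bᵀ * V t * A)))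
    (hV : ∀ t, t₀ < t → t ≤ N - 1 →
      V (t - 1) = (A + B * K t)ᵀ * V t * (A + B * K t) + Q (t - 1) + (K t)ᵀ * R * K t)
    -- DARE solution
    (Vd : Matrix (Fin n) (Fin n) ℝ) (hVd : Vd.PosSemidef)
    (hDARE : Vd = Aᵀ * Vd * A + Qinf - Aᵀ * Vd * B * (Bᵀ * Vd * B + R)⁻¹ * (Bᵀ * Vd * A))
    -- closed-loop transition products
    (Ψ : ℤ → ℤ → Matrix (Fin n) (Fin n) ℝ)
    (hΨdiag : ∀ k, Ψ k k = 1)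
    (hΨ : ∀ k₁ k₂, t₀ ≤ k₂ → k₂ ≤ k₁ → k₁ ≤ N - 2 →
      Ψ (k₁ + 1) k₂ = (A + B * K (k₁ + 1)) * Ψ k₁ k₂) :
    ∀ k₁ k₂, t₀ ≤ k₂ → k₂ ≤ k₁ → k₁ ≤ N - 1 →
      ‖Ψ k₁ k₂‖ ≤ Real.sqrt ((sInf (spectrum ℝ Qlow))⁻¹ * ‖Vd‖) := by
  intro k₁ k₂ hk₂ hk₁₂ hk₁N
  cases isEmpty_or_nonempty (Fin n)
  · simp [Subsingleton.elim (Ψ k₁ k₂) 0]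
  have hQ₀ : ∀ t, t₀ ≤ t → t ≤ N - 1 → 0 ≤ Q t := fun t h₁ h₂ =>
    hQlow.posSemidef.nonneg.trans (hQlowLe t h₁ h₂)
  have hVcost : ∀ t, t₀ < t → t ≤ N - 1 →
      V (t - 1) = closedLoopCost A B R (V t) (K t) + Q (t - 1) := fun t h₁ h₂ => by
    rw [hV t h₁ h₂, closedLoopCost]
    abel
  have hVriccati : ∀ t, t₀ < t → t ≤ N - 1 → V (t - 1) = riccatiMap A B R (V t) + Q (t - 1) :=
    fun t h₁ h₂ => by rw [hVcost t h₁ h₂, hK t h₁ h₂]; rfl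
  have hVdFixed : Vd = riccatiMap A B R Vd + Qinf := by
    rw [riccatiMap_eq hR hVd.nonneg]
    conv_lhs => rw [hDARE]
    abel
  have hbounds := riccati_le_dare hR hQ₀ hQle hVN hVriccati hVdFixed hVd.nonneg
  have hLyapunov : ∀ t, t₀ < t → t ≤ N - 1 →
      (A + B * K t)ᵀ * V t * (A + B * K t) ≤ V (t - 1) := fun t h₁ h₂ => by
    rw [hVcost t h₁ h₂]
    exact transpose_mul_mul_le_closedLoopCost_add hR.posSemidef.nonneg
      (hQ₀ _ (by omega) (by omega)) _ _
  have hcontract := transpose_mul_mul_transition_le hLyapunov hΨdiag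
    (fun k₁ k₂ h₁ h₂ h₃ => hΨ k₁ k₂ h₁ h₂ (by omega)) k₁ k₂ hk₂ hk₁₂ hk₁N
  refine norm_le_sqrt_of_smul_transpose_mul_le hQlow.sInf_spectrum_pos ?_
  calc sInf (spectrum ℝ Qlow) • ((Ψ k₁ k₂)ᵀ * Ψ k₁ k₂)
      ≤ (Ψ k₁ k₂)ᵀ * Qlow * Ψ k₁ k₂ := hQlow.isHermitian.sInf_spectrum_smul_transpose_mul_le _
    _ ≤ (Ψ k₁ k₂)ᵀ * V k₁ * Ψ k₁ k₂ := transpose_mul_mul_le_transpose_mul_mul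
        (le_trans (hQlowLe k₁ (by omega) hk₁N) (hbounds k₁ (by omega) hk₁N).1) _
    _ ≤ V k₂ := hcontract
    _ ≤ Vd := (hbounds k₂ hk₂ (by omega)).2

/-- **Lemma 6 (uniform boundedness of closed-loop transition products).** Along the backward
Riccati recursion with penalties `Q ⪯ Q_t ⪯ Q_∞` and `Q ≻ 0`, every closed-loop transition
product is bounded in spectral norm by `√(λ_min(Q)⁻¹ · ‖V‖₂)`, where `V` is a positive
semidefinite DARE solution. -/
theorem stmt_11 {n p : ℕ}
    (A : Matrix (Fin n) (Fin n) ℝ) (B : Matrix (Fin n) (Fin p) ℝ)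
    (R : Matrix (Fin p) (Fin p) ℝ) (hR : R.PosDef)
    (Qlow : Matrix (Fin n) (Fin n) ℝ) (hQlow : Qlow.PosDef)
    (t₀ N : ℤ) (ht₀N : t₀ < N)
    (Q : ℤ → Matrix (Fin n) (Fin n) ℝ)
    (hQsymm : ∀ t, t₀ ≤ t → t ≤ N - 1 → (Q t).IsSymm)
    (Qinf : Matrix (Fin n) (Fin n) ℝ) (hQinfsymm : Qinf.IsSymm)
    (hQlowLe : ∀ t, t₀ ≤ t → t ≤ N - 1 → (Q t - Qlow).PosSemidef)
    (hQle : ∀ t, t₀ ≤ t → t ≤ N - 1 → (Qinf - Q t).PosSemidef)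
    -- backward Riccati recursion (closed-loop form with optimal gains)
    (V : ℤ → Matrix (Fin n) (Fin n) ℝ) (K : ℤ → Matrix (Fin p) (Fin n) ℝ)
    (hVN : V (N - 1) = Q (N - 1))
    (hK : ∀ t, t₀ < t → t ≤ N - 1 → K t = -((Bᵀ * V t * B + R)⁻¹ * (Bᵀ * V t * A)))
    (hV : ∀ t, t₀ < t → t ≤ N - 1 →
      V (t - 1) = (A + B * K t)ᵀ * V t * (A + B * K t) + Q (t - 1) + (K t)ᵀ * R * K t)
    -- DARE solution
    (Vd : Matrix (Fin n) (Fin n) ℝ) (hVd : Vd.PosSemidef)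
    (hDARE : Vd = Aᵀ * Vd * A + Qinf - Aᵀ * Vd * B * (Bᵀ * Vd * B + R)⁻¹ * (Bᵀ * Vd * A))
    -- closed-loop transition products
    (Ψ : ℤ → ℤ → Matrix (Fin n) (Fin n) ℝ)
    (hΨdiag : ∀ k, Ψ k k = 1)
    (hΨ : ∀ k₁ k₂, t₀ ≤ k₂ → k₂ ≤ k₁ → k₁ ≤ N - 2 →
      Ψ (k₁ + 1) k₂ = (A + B * K (k₁ + 1)) * Ψ k₁ k₂) :
    ∀ k₁ k₂, t₀ ≤ k₂ → k₂ ≤ k₁ → k₁ ≤ N - 1 →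
      ‖Ψ k₁ k₂‖ ≤ Real.sqrt ((sInf (spectrum ℝ Qlow))⁻¹ * ‖Vd‖) :=
  stmt_11_general A B R hR Qlow hQlow t₀ N Q Qinf hQlowLe hQle V K hVN hK hV Vd hVd hDARE Ψ hΨdiag
    hΨ
end

section
/- Let A ∈ ℝ^{n×n}, B ∈ ℝ^{n×p}, R ∈ ℝ^{p×p} symmetric positive definite, integers t₀ < N, symmetric positive semidefinite matrices Q_t (t₀ ≤ t ≤ N−1) and Q_∞ with Q_t ⪯ Q_∞ for all t, and let V_t be the backward Riccati recursion V_{N−1} = Q_{N−1}, V_{t−1} = A'V_tA + Q_{t−1} − A'V_tB(B'V_tB + R)⁻¹B'V_tA. If V is a symmetric positive semidefinite solution of the DARE V = A'VA + Q_∞ − A'VB(B'VB + R)⁻¹B'VA, then V_t ⪯ V for every t₀ ≤ t ≤ N−1. -/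
open Matrix

section helpers
variable {n p : ℕ}

lemma cos_abstract (G : Matrix (Fin n) (Fin n) ℝ) (Nm K : Matrix (Fin p) (Fin n) ℝ)
    (S T : Matrix (Fin p) (Fin p) ℝ)
    (hTsym : Tᵀ = T) (hTS : ∀ X : Matrix (Fin p) (Fin n) ℝ, T * (S * X) = X)
    (hST : ∀ X : Matrix (Fin p) (Fin n) ℝ, S * (T * X) = X) :
    G - Nmᵀ * T * Nm
      = (G + Nmᵀ * K + Kᵀ * Nm + Kᵀ * S * K)
        - (K + T * Nm)ᵀ * S * (K + T * Nm) := by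
  rw [transpose_add, transpose_mul, hTsym]
  simp only [Matrix.add_mul, Matrix.mul_add, Matrix.mul_assoc, hTS, hST]
  abel

lemma riccati_cos (A : Matrix (Fin n) (Fin n) ℝ) (B : Matrix (Fin n) (Fin p) ℝ)
    (R : Matrix (Fin p) (Fin p) ℝ) (hR : R.PosDef)
    (F : Matrix (Fin n) (Fin n) ℝ) (hF : F.PosSemidef) (K : Matrix (Fin p) (Fin n) ℝ) :
    Aᵀ * F * A - Aᵀ * F * B * (Bᵀ * F * B + R)⁻¹ * (Bᵀ * F * A)
      = (A + B * K)ᵀ * F * (A + B * K) + Kᵀ * R * K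
        - (K + (Bᵀ * F * B + R)⁻¹ * (Bᵀ * F * A))ᵀ * (Bᵀ * F * B + R)
            * (K + (Bᵀ * F * B + R)⁻¹ * (Bᵀ * F * A)) := by
  have hFsym : Fᵀ = F := by
    rw [← conjTranspose_eq_transpose_of_trivial]; exact hF.isHermitian
  have hBFB : (Bᵀ * F * B).PosSemidef := by
    have := hF.conjTranspose_mul_mul_same B
    rwa [conjTranspose_eq_transpose_of_trivial] at this
  have hS : (Bᵀ * F * B + R).PosDef := Matrix.PosDef.posSemidef_add hBFB hR
  have hdet : IsUnit (Bᵀ * F * B + R).det := (isUnit_iff_isUnit_det _).mp hS.isUnit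
  have hSsym : (Bᵀ * F * B + R)ᵀ = Bᵀ * F * B + R := by
    rw [← conjTranspose_eq_transpose_of_trivial]; exact hS.isHermitian
  have hTsym : ((Bᵀ * F * B + R)⁻¹)ᵀ = (Bᵀ * F * B + R)⁻¹ := by
    rw [transpose_nonsing_inv, hSsym]
  have hTS : ∀ X : Matrix (Fin p) (Fin n) ℝ,
      (Bᵀ * F * B + R)⁻¹ * ((Bᵀ * F * B + R) * X) = X := fun X => by
    rw [← Matrix.mul_assoc, Matrix.nonsing_inv_mul _ hdet, Matrix.one_mul]
  have hST : ∀ X : Matrix (Fin p) (Fin n) ℝ,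
      (Bᵀ * F * B + R) * ((Bᵀ * F * B + R)⁻¹ * X) = X := fun X => by
    rw [← Matrix.mul_assoc, Matrix.mul_nonsing_inv _ hdet, Matrix.one_mul]
  have hNT : Aᵀ * F * B = (Bᵀ * F * A)ᵀ := by
    rw [transpose_mul, transpose_mul, transpose_transpose, hFsym, Matrix.mul_assoc]
  have key := cos_abstract (Aᵀ * F * A) (Bᵀ * F * A) K (Bᵀ * F * B + R)
    ((Bᵀ * F * B + R)⁻¹) hTsym hTS hST
  calc Aᵀ * F * A - Aᵀ * F * B * (Bᵀ * F * B + R)⁻¹ * (Bᵀ * F * A)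
      = Aᵀ * F * A - (Bᵀ * F * A)ᵀ * (Bᵀ * F * B + R)⁻¹ * (Bᵀ * F * A) := by rw [hNT]
    _ = (Aᵀ * F * A + (Bᵀ * F * A)ᵀ * K + Kᵀ * (Bᵀ * F * A) + Kᵀ * (Bᵀ * F * B + R) * K)
        - (K + (Bᵀ * F * B + R)⁻¹ * (Bᵀ * F * A))ᵀ * (Bᵀ * F * B + R)
            * (K + (Bᵀ * F * B + R)⁻¹ * (Bᵀ * F * A)) := key
    _ = (A + B * K)ᵀ * F * (A + B * K) + Kᵀ * R * K
        - (K + (Bᵀ * F * B + R)⁻¹ * (Bᵀ * F * A))ᵀ * (Bᵀ * F * B + R)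
            * (K + (Bᵀ * F * B + R)⁻¹ * (Bᵀ * F * A)) := by
      have expand2 : (A + B * K)ᵀ * F * (A + B * K) + Kᵀ * R * K
          = Aᵀ * F * A + (Bᵀ * F * A)ᵀ * K + Kᵀ * (Bᵀ * F * A)
            + Kᵀ * (Bᵀ * F * B + R) * K := by
        rw [← hNT]
        simp only [transpose_add, transpose_mul, Matrix.add_mul, Matrix.mul_add,
          Matrix.mul_assoc, hFsym]
        abel
      rw [expand2]

/-- Positive semidefiniteness of the Riccati image. -/
lemma riccati_psd (A : Matrix (Fin n) (Fin n) ℝ) (B : Matrix (Fin n) (Fin p) ℝ)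
    (R : Matrix (Fin p) (Fin p) ℝ) (hR : R.PosDef)
    (F : Matrix (Fin n) (Fin n) ℝ) (hF : F.PosSemidef)
    (Qc : Matrix (Fin n) (Fin n) ℝ) (hQc : Qc.PosSemidef) :
    (Aᵀ * F * A + Qc - Aᵀ * F * B * (Bᵀ * F * B + R)⁻¹ * (Bᵀ * F * A)).PosSemidef := by
  set K : Matrix (Fin p) (Fin n) ℝ := -((Bᵀ * F * B + R)⁻¹ * (Bᵀ * F * A)) with hK
  have hzero : K + (Bᵀ * F * B + R)⁻¹ * (Bᵀ * F * A) = 0 := by rw [hK]; abel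
  have key := riccati_cos A B R hR F hF K
  rw [hzero] at key
  simp only [Matrix.zero_mul, Matrix.mul_zero, transpose_zero, sub_zero] at key
  have h1 : ((A + B * K)ᵀ * F * (A + B * K)).PosSemidef := by
    have := hF.conjTranspose_mul_mul_same (A + B * K)
    rwa [conjTranspose_eq_transpose_of_trivial] at this
  have h2 : (Kᵀ * R * K).PosSemidef := by
    have := hR.posSemidef.conjTranspose_mul_mul_same K
    rwa [conjTranspose_eq_transpose_of_trivial] at this
  have : Aᵀ * F * A + Qc - Aᵀ * F * B * (Bᵀ * F * B + R)⁻¹ * (Bᵀ * F * A)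
      = ((A + B * K)ᵀ * F * (A + B * K) + Kᵀ * R * K) + Qc := by
    rw [← key]; abel
  rw [this]
  exact (h1.add h2).add hQc

/-- Monotonicity step. -/
lemma riccati_mono (A : Matrix (Fin n) (Fin n) ℝ) (B : Matrix (Fin n) (Fin p) ℝ)
    (R : Matrix (Fin p) (Fin p) ℝ) (hR : R.PosDef)
    (F G : Matrix (Fin n) (Fin n) ℝ) (hF : F.PosSemidef) (hG : G.PosSemidef)
    (hFG : (G - F).PosSemidef)
    (Qc Qd : Matrix (Fin n) (Fin n) ℝ) (hQ : (Qd - Qc).PosSemidef) :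
    ((Aᵀ * G * A + Qd - Aᵀ * G * B * (Bᵀ * G * B + R)⁻¹ * (Bᵀ * G * A))
      - (Aᵀ * F * A + Qc - Aᵀ * F * B * (Bᵀ * F * B + R)⁻¹ * (Bᵀ * F * A))).PosSemidef := by
  set K : Matrix (Fin p) (Fin n) ℝ := -((Bᵀ * G * B + R)⁻¹ * (Bᵀ * G * A)) with hK
  have hzero : K + (Bᵀ * G * B + R)⁻¹ * (Bᵀ * G * A) = 0 := by rw [hK]; abel
  have keyG := riccati_cos A B R hR G hG K
  rw [hzero] at keyG
  simp only [Matrix.zero_mul, Matrix.mul_zero, transpose_zero, sub_zero] at keyG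
  have keyF := riccati_cos A B R hR F hF K
  have h1 : ((A + B * K)ᵀ * (G - F) * (A + B * K)).PosSemidef := by
    have := hFG.conjTranspose_mul_mul_same (A + B * K)
    rwa [conjTranspose_eq_transpose_of_trivial] at this
  have h3 : ((K + (Bᵀ * F * B + R)⁻¹ * (Bᵀ * F * A))ᵀ * (Bᵀ * F * B + R)
      * (K + (Bᵀ * F * B + R)⁻¹ * (Bᵀ * F * A))).PosSemidef := by
    have hBFB : (Bᵀ * F * B).PosSemidef := by
      have := hF.conjTranspose_mul_mul_same B
      rwa [conjTranspose_eq_transpose_of_trivial] at this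
    have hS : (Bᵀ * F * B + R).PosDef := Matrix.PosDef.posSemidef_add hBFB hR
    have := hS.posSemidef.conjTranspose_mul_mul_same
      (K + (Bᵀ * F * B + R)⁻¹ * (Bᵀ * F * A))
    rwa [conjTranspose_eq_transpose_of_trivial] at this
  have heq : (Aᵀ * G * A + Qd - Aᵀ * G * B * (Bᵀ * G * B + R)⁻¹ * (Bᵀ * G * A))
      - (Aᵀ * F * A + Qc - Aᵀ * F * B * (Bᵀ * F * B + R)⁻¹ * (Bᵀ * F * A))
      = ((A + B * K)ᵀ * (G - F) * (A + B * K) + (Qd - Qc))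
        + (K + (Bᵀ * F * B + R)⁻¹ * (Bᵀ * F * A))ᵀ * (Bᵀ * F * B + R)
            * (K + (Bᵀ * F * B + R)⁻¹ * (Bᵀ * F * A)) := by
    have e1 : Aᵀ * G * A - Aᵀ * G * B * (Bᵀ * G * B + R)⁻¹ * (Bᵀ * G * A)
        = (A + B * K)ᵀ * G * (A + B * K) + Kᵀ * R * K := keyG
    have e2 := keyF
    have e3 : (A + B * K)ᵀ * (G - F) * (A + B * K)
        = (A + B * K)ᵀ * G * (A + B * K) - (A + B * K)ᵀ * F * (A + B * K) := by
      rw [Matrix.mul_sub, Matrix.sub_mul]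
    calc (Aᵀ * G * A + Qd - Aᵀ * G * B * (Bᵀ * G * B + R)⁻¹ * (Bᵀ * G * A))
        - (Aᵀ * F * A + Qc - Aᵀ * F * B * (Bᵀ * F * B + R)⁻¹ * (Bᵀ * F * A))
        = (Aᵀ * G * A - Aᵀ * G * B * (Bᵀ * G * B + R)⁻¹ * (Bᵀ * G * A))
          - (Aᵀ * F * A - Aᵀ * F * B * (Bᵀ * F * B + R)⁻¹ * (Bᵀ * F * A))
          + (Qd - Qc) := by abel
      _ = ((A + B * K)ᵀ * G * (A + B * K) + Kᵀ * R * K)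
          - ((A + B * K)ᵀ * F * (A + B * K) + Kᵀ * R * K
            - (K + (Bᵀ * F * B + R)⁻¹ * (Bᵀ * F * A))ᵀ * (Bᵀ * F * B + R)
                * (K + (Bᵀ * F * B + R)⁻¹ * (Bᵀ * F * A)))
          + (Qd - Qc) := by rw [e1, ← e2]
      _ = ((A + B * K)ᵀ * (G - F) * (A + B * K) + (Qd - Qc))
          + (K + (Bᵀ * F * B + R)⁻¹ * (Bᵀ * F * A))ᵀ * (Bᵀ * F * B + R)
              * (K + (Bᵀ * F * B + R)⁻¹ * (Bᵀ * F * A)) := by rw [e3]; abel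
  rw [heq]
  exact (h1.add hQ).add h3

end helpers

/-- **Step 1 in the proof of Lemma 6.** The time-varying backward Riccati recursion is dominated
in the Loewner order by the DARE solution whenever the time-varying state penalties are
dominated by the stationary penalty. -/
theorem stmt_12 {n p : ℕ}
    (A : Matrix (Fin n) (Fin n) ℝ) (B : Matrix (Fin n) (Fin p) ℝ)
    (R : Matrix (Fin p) (Fin p) ℝ) (hR : R.PosDef)
    (t₀ N : ℤ) (ht₀N : t₀ < N)
    (Q : ℤ → Matrix (Fin n) (Fin n) ℝ)
    (hQ : ∀ t, t₀ ≤ t → t ≤ N - 1 → (Q t).PosSemidef)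
    (Qinf : Matrix (Fin n) (Fin n) ℝ) (hQinf : Qinf.PosSemidef)
    (hQle : ∀ t, t₀ ≤ t → t ≤ N - 1 → (Qinf - Q t).PosSemidef)
    -- backward Riccati recursion (standard form)
    (V : ℤ → Matrix (Fin n) (Fin n) ℝ)
    (hVN : V (N - 1) = Q (N - 1))
    (hV : ∀ t, t₀ < t → t ≤ N - 1 →
      V (t - 1) = Aᵀ * V t * A + Q (t - 1)
        - Aᵀ * V t * B * (Bᵀ * V t * B + R)⁻¹ * (Bᵀ * V t * A))
    -- DARE solution
    (Vd : Matrix (Fin n) (Fin n) ℝ) (hVd : Vd.PosSemidef)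
    (hDARE : Vd = Aᵀ * Vd * A + Qinf - Aᵀ * Vd * B * (Bᵀ * Vd * B + R)⁻¹ * (Bᵀ * Vd * A)) :
    ∀ t, t₀ ≤ t → t ≤ N - 1 → (Vd - V t).PosSemidef := by
  
  -- main claim by downward induction
  have main : ∀ k : ℕ, t₀ ≤ N - 1 - k →
      ((V (N - 1 - k)).PosSemidef ∧ (Vd - V (N - 1 - k)).PosSemidef) := by
    intro k
    induction k with
    | zero =>
      intro hk
      push_cast at hk ⊢
      rw [sub_zero, hVN]
      have h0 : t₀ ≤ N - 1 := by omega
      refine ⟨hQ _ h0 le_rfl, ?_⟩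
      -- Vd - Q (N-1) = riccati_mono with F = 0
      have := riccati_mono A B R hR 0 Vd PosSemidef.zero hVd (by simpa using hVd)
        (Q (N - 1)) Qinf (hQle _ h0 le_rfl)
      simp only [Matrix.mul_zero, Matrix.zero_mul, zero_add, zero_sub, sub_zero,
        Matrix.mul_zero, add_zero] at this
      rw [← hDARE] at this
      -- this : (Vd - (0 + Q (N-1) - ...)).PosSemidef  -- need to check form
      convert this using 2
    | succ k ih =>
      intro hk
      have hk' : t₀ ≤ N - 1 - k := by push_cast at hk ⊢; omega
      obtain ⟨hpsd, hdom⟩ := ih hk'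
      have ht1 : t₀ < N - 1 - k := by push_cast at hk ⊢; omega
      have ht2 : N - 1 - k ≤ N - 1 := by omega
      have hrec := hV (N - 1 - k) ht1 ht2
      have hidx : N - 1 - ((k : ℤ) + 1) = N - 1 - k - 1 := by ring
      have hq1 : t₀ ≤ N - 1 - k - 1 := by push_cast at hk; omega
      have hq2 : N - 1 - k - 1 ≤ N - 1 := by omega
      constructor
      · rw [show ((N:ℤ) - 1 - (k+1:ℕ)) = N - 1 - k - 1 by push_cast; ring, hrec]
        exact riccati_psd A B R hR (V (N - 1 - k)) hpsd (Q (N - 1 - k - 1))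
          (hQ _ hq1 hq2)
      · rw [show ((N:ℤ) - 1 - (k+1:ℕ)) = N - 1 - k - 1 by push_cast; ring, hrec]
        have := riccati_mono A B R hR (V (N - 1 - k)) Vd hpsd hVd hdom
          (Q (N - 1 - k - 1)) Qinf (hQle _ hq1 hq2)
        rw [← hDARE] at this
        exact this
  intro t ht1 ht2
  have hkey := main (N - 1 - t).toNat (by omega)
  have : N - 1 - ((N - 1 - t).toNat : ℤ) = t := by omega
  rw [this] at hkey
  exact hkey.2
end

section
/- Let A ∈ ℝ^{n×n}, B ∈ ℝ^{n×p}, R ∈ ℝ^{p×p} symmetric positive semidefinite, integers t₀ < N, symmetric positive semidefinite matrices Q_t (t₀ ≤ t ≤ N−1), and let V_t, K_t be given by the backward Riccati recursion V_{N−1} = Q_{N−1}, K_t = −(B'V_tB + R)⁻¹B'V_tA (assuming B'V_tB + R invertible), V_{t−1} = (A + BK_t)'V_t(A + BK_t) + Q_{t−1} + K_t'RK_t, and let Ψ_{k₁:k₂} := (A + BK_{k₁})⋯(A + BK_{k₂+1}) with Ψ_{k:k} = I. Then for all k₁ ≥ k₂ ≥ t₀ with N−1 ≥ k₁: V_{k₂}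 ⪰ Ψ_{k₁:k₂}' V_{k₁} Ψ_{k₁:k₂}. -/
open Matrix

/-!
If `W = Fᴴ X F + S` with `S ⪰ 0`, then `Ψᴴ W Ψ ⪰ (F Ψ)ᴴ X (F Ψ)` for every `Ψ`. One Riccati step
`V_{t-1} = F_tᴴ V_t F_t + (Q_{t-1} + K_tᴴ R K_t)` has this shape with `F_t = A + B K_t`, so by
induction on `k₁` the inequality `V_{k₂} ⪰ Ψ_{k₁:k₂}ᴴ V_{k₁} Ψ_{k₁:k₂}` propagates from the trivial
case `k₁ = k₂`, each step multiplying `Ψ` on the left by one more closed-loop factor.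
-/

namespace Matrix

variable {l m n R : Type*} [Fintype l] [Fintype m] [Fintype n]
  [CommRing R] [PartialOrder R] [StarRing R] [StarOrderedRing R]

theorem PosSemidef.sub_conjTranspose_mul_mul_of_eq_add {V : Matrix m m R} {Ψ : Matrix n m R}
    {W S : Matrix n n R} {F : Matrix l n R} {X : Matrix l l R}
    (h : (V - Ψᴴ * W * Ψ).PosSemidef) (hW : W = Fᴴ * X * F + S) (hS : S.PosSemidef) :
    (V - (F * Ψ)ᴴ * X * (F * Ψ)).PosSemidef := by
  have hsplit : V - (F * Ψ)ᴴ * X * (F * Ψ) = (V - Ψᴴ * W * Ψ) + Ψᴴ * S * Ψ := by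
    subst hW
    simp only [conjTranspose_mul, Matrix.mul_add, Matrix.add_mul, Matrix.mul_assoc]
    abel
  rw [hsplit]
  exact h.add (hS.conjTranspose_mul_mul_same Ψ)

end Matrix

theorem stmt_13_general {n p : ℕ}
    (A : Matrix (Fin n) (Fin n) ℝ) (B : Matrix (Fin n) (Fin p) ℝ)
    (R : Matrix (Fin p) (Fin p) ℝ) (hR : R.PosSemidef)
    (t₀ N : ℤ)
    (Q : ℤ → Matrix (Fin n) (Fin n) ℝ)
    (hQ : ∀ t, t₀ ≤ t → t ≤ N - 1 → (Q t).PosSemidef)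
    -- backward Riccati recursion (closed-loop form)
    (V : ℤ → Matrix (Fin n) (Fin n) ℝ) (K : ℤ → Matrix (Fin p) (Fin n) ℝ)
    (hV : ∀ t, t₀ < t → t ≤ N - 1 →
      V (t - 1) = (A + B * K t)ᵀ * V t * (A + B * K t) + Q (t - 1) + (K t)ᵀ * R * K t)
    -- closed-loop transition products
    (Ψ : ℤ → ℤ → Matrix (Fin n) (Fin n) ℝ)
    (hΨdiag : ∀ k, Ψ k k = 1)
    (hΨ : ∀ k₁ k₂, t₀ ≤ k₂ → k₂ ≤ k₁ → k₁ ≤ N - 2 →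
      Ψ (k₁ + 1) k₂ = (A + B * K (k₁ + 1)) * Ψ k₁ k₂) :
    ∀ k₁ k₂, t₀ ≤ k₂ → k₂ ≤ k₁ → k₁ ≤ N - 1 →
      (V k₂ - (Ψ k₁ k₂)ᵀ * V k₁ * Ψ k₁ k₂).PosSemidef := by
  simp only [← conjTranspose_eq_transpose_of_trivial] at hV ⊢
  intro k₁ k₂ hk₂ hk₂₁
  induction k₁, hk₂₁ using Int.leInduction with
  | base => simpa [hΨdiag] using fun _ ↦ PosSemidef.zero
  | succ k hk ih =>
    intro hkN
    have hstep : V k = (A + B * K (k + 1))ᴴ * V (k + 1) * (A + B * K (k + 1))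
        + (Q k + (K (k + 1))ᴴ * R * K (k + 1)) := by
      simpa [add_assoc] using hV (k + 1) (by omega) hkN
    have hS : (Q k + (K (k + 1))ᴴ * R * K (k + 1)).PosSemidef :=
      (hQ k (by omega) (by omega)).add (hR.conjTranspose_mul_mul_same _)
    rw [hΨ k k₂ hk₂ hk (by omega)]
    exact (ih (by omega)).sub_conjTranspose_mul_mul_of_eq_add hstep hS

/-- **Step 2 in the proof of Lemma 6.** Since each Riccati step adds a positive semidefinite
term, the recursion dominates, in the Loewner order, the closed-loop congruence of any later
iterate. -/
theorem stmt_13 {n p : ℕ}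
    (A : Matrix (Fin n) (Fin n) ℝ) (B : Matrix (Fin n) (Fin p) ℝ)
    (R : Matrix (Fin p) (Fin p) ℝ) (hR : R.PosSemidef)
    (t₀ N : ℤ) (ht₀N : t₀ < N)
    (Q : ℤ → Matrix (Fin n) (Fin n) ℝ)
    (hQ : ∀ t, t₀ ≤ t → t ≤ N - 1 → (Q t).PosSemidef)
    -- backward Riccati recursion (closed-loop form)
    (V : ℤ → Matrix (Fin n) (Fin n) ℝ) (K : ℤ → Matrix (Fin p) (Fin n) ℝ)
    (hVN : V (N - 1) = Q (N - 1))
    (hinv : ∀ t, t₀ < t → t ≤ N - 1 → IsUnit (Bᵀ * V t * B + R))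
    (hK : ∀ t, t₀ < t → t ≤ N - 1 → K t = -((Bᵀ * V t * B + R)⁻¹ * (Bᵀ * V t * A)))
    (hV : ∀ t, t₀ < t → t ≤ N - 1 →
      V (t - 1) = (A + B * K t)ᵀ * V t * (A + B * K t) + Q (t - 1) + (K t)ᵀ * R * K t)
    -- closed-loop transition products
    (Ψ : ℤ → ℤ → Matrix (Fin n) (Fin n) ℝ)
    (hΨdiag : ∀ k, Ψ k k = 1)
    (hΨ : ∀ k₁ k₂, t₀ ≤ k₂ → k₂ ≤ k₁ → k₁ ≤ N - 2 →
      Ψ (k₁ + 1) k₂ = (A + B * K (k₁ + 1)) * Ψ k₁ k₂) :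
    ∀ k₁ k₂, t₀ ≤ k₂ → k₂ ≤ k₁ → k₁ ≤ N - 1 →
      (V k₂ - (Ψ k₁ k₂)ᵀ * V k₁ * Ψ k₁ k₂).PosSemidef :=
  stmt_13_general A B R hR t₀ N Q hQ V K hV Ψ hΨdiag hΨ
end

section
/- Consider the closed-loop fully-observed system x_{t+1} = (A + BK_t)x_t + B l_t + w_{t+1}, 0 ≤ t ≤ N−1, with deterministic x₀ ∈ ℝⁿ, deterministic matrices K_t ∈ ℝ^{p×n} and vectors l_t ∈ ℝᵖ, and (w_t)_{t=1}^{N} i.i.d. ℝⁿ-valued with 𝔼‖w_t‖⁴ < ∞, mean w̄, covariance W, and w_{t+1} independent of σ(w_1,…,w_t). Let x̂_t := 𝔼[x_t | σ(w_1,…,w_{t−1})] = (A + BK_{t−1})x_{t−1} + Bl_{t−1} + w̄ and m₃ := 2Q·𝔼[(w−w̄)·((w−w̄)'Q(w−w̄))]. Define the backward recursions with terminal values P_N = 4QWQ, ζ_N = m₃, d_N = 0: P_{t−1} = (A + BK_{t−1})'P_t(A + BK_{t−1}) + 4QWQ; ζ_{t−1} = (A + BK_{t−1})'ζ_t + m₃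 + (A + BK_{t−1})'P_t(Bl_{t−1} + w̄); d_{t−1} = d_t + tr([P_{t−1} − 4QWQ]W) + 2ζ_t'(w̄ + Bl_{t−1}) + (Bl_{t−1} + w̄)'P_t(Bl_{t−1} + w̄). Then the risk functional J_R := 𝔼 Σ_{t=1}^{N}[4·x̂_t'QWQ x̂_t + 2·x̂_t'm₃] satisfies J_R = x₀'(P₀ − 4QWQ)x₀ + 2(ζ₀ − m₃)'x₀ + d₀ − tr([P₀ − 4QWQ]W). -/
/-!
Write `V_t(y) = y'(P_t - 4QWQ)y + 2(ζ_t - m₃)'y + d_t - tr((P_t - 4QWQ)W)`, so that the claim is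
`J_R = V_0(x₀)`, and `V_N = 0`. The backward recursions say exactly that `V_t(y) = x̂'P_{t+1}x̂
+ 2ζ_{t+1}'x̂ + d_{t+1}` with `x̂ = (A + BK_t)y + Bl_t + w̄`: an affine-quadratic function composed
with an affine map is affine-quadratic, with these coefficients. On the other hand, averaging an
affine-quadratic function over an independent centred noise of covariance `W` only adds
`tr(SW)` to its constant term, so `𝔼 V_{t+1}(x_{t+1}) = 𝔼 V_t(x_t) - 𝔼[4x̂_{t+1}'QWQx̂_{t+1}
+ 2x̂_{t+1}'m₃]`, and the sum defining `J_R` telescopes.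
-/

open Matrix MeasureTheory ProbabilityTheory

section Algebra

variable {ι κ : Type*} [Fintype ι]

def affineQuadratic (S : Matrix ι ι ℝ) (r : ι → ℝ) (e : ℝ) (y : ι → ℝ) : ℝ :=
  y ⬝ᵥ (S *ᵥ y) + 2 * (r ⬝ᵥ y) + e

lemma affineQuadratic_comp_affine [Fintype κ] {P : Matrix ι ι ℝ} (hP : P.IsSymm) (ζ : ι → ℝ) (e : ℝ)
    (G : Matrix ι κ ℝ) (c : ι → ℝ) (y : κ → ℝ) :
    affineQuadratic P ζ e (G *ᵥ y + c)
      = affineQuadratic (Gᵀ * P * G) (Gᵀ *ᵥ (ζ + P *ᵥ c)) (e + 2 * (ζ ⬝ᵥ c) + c ⬝ᵥ (P *ᵥ c))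
          y := by
  have hcross : c ⬝ᵥ (P *ᵥ (G *ᵥ y)) = (G *ᵥ y) ⬝ᵥ (P *ᵥ c) := by
    rw [dotProduct_mulVec, ← mulVec_transpose, hP.eq, dotProduct_comm]
  simp only [affineQuadratic, ← mulVec_mulVec, dotProduct_transpose_mulVec, dotProduct_comm _ y]
  simp only [mulVec_add, dotProduct_add, add_dotProduct, hcross, dotProduct_comm (P *ᵥ _)]
  ring

lemma affineQuadratic_sub (S S' : Matrix ι ι ℝ) (r r' : ι → ℝ) (e e' : ℝ) (y : ι → ℝ) :
    affineQuadratic (S - S') (r - r') (e - e') y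
      = affineQuadratic S r e y - affineQuadratic S' r' e' y := by
  simp only [affineQuadratic, sub_mulVec, dotProduct_sub, sub_dotProduct]
  ring

lemma Matrix.IsSymm.transpose_mul_mul {P : Matrix ι ι ℝ} (hP : P.IsSymm)
    (G : Matrix ι κ ℝ) : (Gᵀ * P * G).IsSymm := by
  simp [IsSymm, transpose_mul, hP.eq, Matrix.mul_assoc]

lemma isSymm_of_backward_recursion {P G : ℕ → Matrix ι ι ℝ}
    {C : Matrix ι ι ℝ} (hC : C.IsSymm) {N : ℕ} (hPN : (P N).IsSymm)
    (hP : ∀ t < N, P t = (G t)ᵀ * P (t + 1) * G t + C) {t : ℕ} (ht : t ≤ N) : (P t).IsSymm := by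
  refine Nat.decreasingInduction (motive := fun t _ => (P t).IsSymm) (fun k hk ih => ?_) hPN ht
  rw [hP k hk]
  exact (ih.transpose_mul_mul (G k)).add hC

end Algebra

lemma Finset.sum_Icc_one_eq_sub {M : Type*} [AddCommGroup M] {N : ℕ} {f g : ℕ → M}
    (h : ∀ t < N, f (t + 1) = g t - g (t + 1)) : ∑ t ∈ Finset.Icc 1 N, f t = g 0 - g N := by
  rw [← Finset.Ico_add_one_right_eq_Icc, Finset.sum_Ico_eq_sum_range, Nat.add_sub_cancel,
    ← Finset.sum_range_sub']
  exact Finset.sum_congr rfl fun t ht => by rw [add_comm 1 t, h t (Finset.mem_range.1 ht)]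

section RandomVectors

variable {Ω ι κ : Type*} [Fintype ι] {mΩ : MeasurableSpace Ω} {μ : Measure Ω}

lemma memLp_two_of_integrable_sq_sum_sq [IsFiniteMeasure μ] {X : Ω → ι → ℝ}
    (hX : AEStronglyMeasurable X μ) (h : Integrable (fun ω => (∑ i, X ω i ^ 2) ^ 2) μ) :
    MemLp X 2 μ := by
  refine memLp_pi_iff.2 fun i => ?_
  have hXi := (continuous_apply i).comp_aestronglyMeasurable hX
  refine (memLp_two_iff_integrable_sq hXi).2 ?_
  refine ((integrable_const 1).add h).mono' (hXi.pow 2) (ae_of_all _ fun ω => ?_)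
  have hi : X ω i ^ 2 ≤ ∑ j, X ω j ^ 2 :=
    Finset.single_le_sum (f := fun j => X ω j ^ 2) (fun j _ => sq_nonneg _) (Finset.mem_univ i)
  rw [Real.norm_of_nonneg (sq_nonneg _)]
  show X ω i ^ 2 ≤ 1 + (∑ j, X ω j ^ 2) ^ 2
  nlinarith [sq_nonneg (∑ j, X ω j ^ 2 - 1)]

lemma MeasureTheory.MemLp.mulVec [Fintype κ] {p : ENNReal} {X : Ω → ι → ℝ}
    (hX : MemLp X p μ) (G : Matrix κ ι ℝ) : MemLp (fun ω => G *ᵥ X ω) p μ :=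
  (Matrix.mulVecLin G).toContinuousLinearMap.comp_memLp' hX

lemma MeasureTheory.Integrable.const_dotProduct {X : Ω → ι → ℝ} (hX : Integrable X μ) (r : ι → ℝ) :
    Integrable (fun ω => r ⬝ᵥ X ω) μ :=
  integrable_finsetSum _ fun i _ => (hX.eval i).const_mul (r i)

lemma integral_const_dotProduct {X : Ω → ι → ℝ} (hX : Integrable X μ) (r : ι → ℝ) :
    ∫ ω, r ⬝ᵥ X ω ∂μ = r ⬝ᵥ ∫ ω, X ω ∂μ := by
  simp only [dotProduct]
  rw [integral_finsetSum _ fun i _ => (hX.eval i).const_mul (r i)]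
  simp only [integral_const_mul, eval_integral hX.eval]

lemma integrable_dotProduct_mulVec [Fintype κ] {X : Ω → ι → ℝ} {Y : Ω → κ → ℝ} (hX : MemLp X 2 μ)
    (hY : MemLp Y 2 μ) (S : Matrix ι κ ℝ) :
    Integrable (fun ω => X ω ⬝ᵥ (S *ᵥ Y ω)) μ := by
  simp only [dotProduct, mulVec, Finset.mul_sum]
  refine integrable_finsetSum _ fun i _ => integrable_finsetSum _ fun j _ => ?_
  exact (((hX.eval i).integrable_mul (hY.eval j)).const_mul (S i j)).congr
    (ae_of_all _ fun ω => by simp only [Pi.mul_apply]; ring)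

lemma ProbabilityTheory.IndepFun.integral_dotProduct_mulVec [Fintype κ] {X : Ω → ι → ℝ}
    {Y : Ω → κ → ℝ} (hXY : IndepFun X Y μ) (hX : Integrable X μ) (hY : Integrable Y μ) (S : Matrix ι κ ℝ) :
    ∫ ω, X ω ⬝ᵥ (S *ᵥ Y ω) ∂μ = (∫ ω, X ω ∂μ) ⬝ᵥ (S *ᵥ ∫ ω, Y ω ∂μ) := by
  classical
  simpa [toLinearMap₂'_apply'] using
    hXY.integral_bilin hX hY (Matrix.toLinearMap₂' ℝ S).toContinuousBilinearMap

lemma integral_dotProduct_mulVec_self {X : Ω → ι → ℝ} (hX : MemLp X 2 μ) (S : Matrix ι ι ℝ) :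
    ∫ ω, X ω ⬝ᵥ (S *ᵥ X ω) ∂μ = trace (S * of fun i j => ∫ ω, X ω i * X ω j ∂μ) := by
  have hterm : ∀ i j, Integrable (fun ω => X ω i * (S i j * X ω j)) μ := fun i j =>
    (((hX.eval i).integrable_mul (hX.eval j)).const_mul (S i j)).congr
      (ae_of_all _ fun ω => by simp only [Pi.mul_apply]; ring)
  simp only [dotProduct, mulVec, Finset.mul_sum, trace, diag, mul_apply, of_apply]
  rw [integral_finsetSum _ fun i _ => integrable_finsetSum _ fun j _ => hterm i j]
  refine Finset.sum_congr rfl fun i _ => ?_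
  rw [integral_finsetSum _ fun j _ => hterm i j]
  refine Finset.sum_congr rfl fun j _ => ?_
  rw [← integral_const_mul]
  congr 1; ext ω; ring

lemma integrable_affineQuadratic [IsFiniteMeasure μ] {X : Ω → ι → ℝ} (hX : MemLp X 2 μ)
    (S : Matrix ι ι ℝ) (r : ι → ℝ) (e : ℝ) :
    Integrable (fun ω => affineQuadratic S r e (X ω)) μ :=
  ((integrable_dotProduct_mulVec hX hX S).add
    (((hX.integrable one_le_two).const_dotProduct r).const_mul 2)).add (integrable_const e)

lemma integral_affineQuadratic_add_of_indepFun [IsProbabilityMeasure μ] {X δ : Ω → ι → ℝ}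
    (hXδ : IndepFun X δ μ) (hX : MemLp X 2 μ) (hδ : MemLp δ 2 μ) (hδ0 : ∫ ω, δ ω ∂μ = 0)
    (S : Matrix ι ι ℝ) (r : ι → ℝ) (e : ℝ) :
    ∫ ω, affineQuadratic S r e (X ω + δ ω) ∂μ
      = ∫ ω, affineQuadratic S r (e + trace (S * of fun i j => ∫ ω, δ ω i * δ ω j ∂μ)) (X ω)
          ∂μ := by
  have hX1 := hX.integrable one_le_two
  have hδ1 := hδ.integrable one_le_two
  have hXSX := integrable_affineQuadratic hX S r e
  have hXSδ := integrable_dotProduct_mulVec hX hδ S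
  have hδSX := integrable_dotProduct_mulVec hδ hX S
  have hrδ := (hδ1.const_dotProduct r).const_mul 2
  have hexpand : ∀ ω, affineQuadratic S r e (X ω + δ ω) = affineQuadratic S r e (X ω)
      + X ω ⬝ᵥ (S *ᵥ δ ω) + δ ω ⬝ᵥ (S *ᵥ X ω) + 2 * (r ⬝ᵥ δ ω) + δ ω ⬝ᵥ (S *ᵥ δ ω) := by
    intro ω
    simp only [affineQuadratic, mulVec_add, dotProduct_add, add_dotProduct]
    ring
  have hshift : ∀ (c : ℝ) (y : ι → ℝ),
      affineQuadratic S r (e + c) y = affineQuadratic S r e y + c := by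
    intro c y
    simp only [affineQuadratic]
    ring
  simp only [hexpand, hshift]
  rw [integral_add (((hXSX.fun_add hXSδ).fun_add hδSX).fun_add hrδ)
      (integrable_dotProduct_mulVec hδ hδ S),
    integral_add ((hXSX.fun_add hXSδ).fun_add hδSX) hrδ, integral_add (hXSX.fun_add hXSδ) hδSX,
    integral_add hXSX hXSδ, integral_add hXSX (integrable_const _),
    hXδ.integral_dotProduct_mulVec hX1 hδ1, hXδ.symm.integral_dotProduct_mulVec hδ1 hX1,
    integral_const_mul, integral_const_dotProduct hδ1, integral_dotProduct_mulVec_self hδ, hδ0,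
    integral_const]
  simp

lemma ProbabilityTheory.IdentDistrib.integral_eq_pi {Ω' : Type*} {mΩ' : MeasurableSpace Ω'}
    {ν : Measure Ω'} {Y : Ω → ι → ℝ} {Z : Ω' → ι → ℝ} (h : IdentDistrib Y Z μ ν)
    (hZ : Integrable Z ν) : ∫ ω, Y ω ∂μ = fun i => ∫ ω, Z ω i ∂ν := by
  rw [h.integral_eq]
  ext i
  exact eval_integral hZ.eval i

end RandomVectors

lemma ProbabilityTheory.IdentDistrib.centered_covariance_eq {Ω Ω' ι : Type*}
    {mΩ : MeasurableSpace Ω} {mΩ' : MeasurableSpace Ω'} {μ : Measure Ω} {ν : Measure Ω'}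
    {Y : Ω → ι → ℝ} {Z : Ω' → ι → ℝ} (h : IdentDistrib Y Z μ ν) (m : ι → ℝ) :
    (of fun i j => ∫ ω, (Y ω - m) i * (Y ω - m) j ∂μ)
      = of fun i j => ∫ ω, (Z ω i - m i) * (Z ω j - m j) ∂ν := by
  ext i j
  exact (h.comp (u := fun y => (y - m) i * (y - m) j) (by fun_prop)).integral_eq

section ClosedLoop

variable {Ω E ι : Type*} [Fintype ι] {mΩ : MeasurableSpace Ω} [MeasurableSpace E]

abbrev noiseHistory (w : ℕ → Ω → E) (t : ℕ) : MeasurableSpace Ω :=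
  ⨆ s ∈ Set.Icc 1 t, MeasurableSpace.comap (w s) inferInstance

lemma noiseHistory_mono (w : ℕ → Ω → E) : Monotone (noiseHistory w) := fun _ _ hst =>
  iSup₂_le fun s hs => le_iSup₂ (f := fun s (_ : s ∈ Set.Icc 1 _) =>
    MeasurableSpace.comap (w s) inferInstance) s (Set.Icc_subset_Icc_right hst hs)

lemma measurable_noiseHistory_self (w : ℕ → Ω → E) {t : ℕ} (ht : 1 ≤ t) :
    Measurable[noiseHistory w t] (w t) :=
  measurable_iff_comap_le.2 <| le_iSup₂ (f := fun s (_ : s ∈ Set.Icc 1 t) =>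
    MeasurableSpace.comap (w s) inferInstance) t ⟨ht, le_rfl⟩

variable {N : ℕ} {G : ℕ → Matrix ι ι ℝ} {b : ℕ → ι → ℝ} {x₀ : ι → ℝ} {w x : ℕ → Ω → ι → ℝ}

lemma measurable_noiseHistory_of_affine_recursion (hx0 : x 0 = fun _ => x₀)
    (hx : ∀ t < N, x (t + 1) = fun ω => G t *ᵥ x t ω + b t + w (t + 1) ω) {t : ℕ} (ht : t ≤ N) :
    Measurable[noiseHistory w t] (x t) := by
  induction t with
  | zero => rw [hx0]; exact measurable_const
  | succ t ih =>
    rw [hx t ht]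
    have hφ : Measurable fun q : (ι → ℝ) × (ι → ℝ) => G t *ᵥ q.1 + b t + q.2 := by fun_prop
    exact hφ.comp (((ih (by omega)).mono (noiseHistory_mono w t.le_succ) le_rfl).prodMk
      (measurable_noiseHistory_self w (Nat.le_add_left 1 t)))

lemma memLp_of_affine_recursion {μ : Measure Ω} [IsFiniteMeasure μ] (hx0 : x 0 = fun _ => x₀)
    (hx : ∀ t < N, x (t + 1) = fun ω => G t *ᵥ x t ω + b t + w (t + 1) ω)
    (hw : ∀ t, 1 ≤ t → t ≤ N → MemLp (w t) 2 μ) {t : ℕ} (ht : t ≤ N) : MemLp (x t) 2 μ := by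
  induction t with
  | zero => rw [hx0]; exact memLp_const x₀
  | succ t ih =>
    rw [hx t ht]
    exact (((ih (by omega)).mulVec (G t)).add (memLp_const (b t))).add (hw (t + 1) (by omega) ht)

end ClosedLoop

section

variable {Ω ι : Type*} [Fintype ι] {mΩ : MeasurableSpace Ω} {μ : Measure Ω}

/-- One step of the backward recursion, with `X = x_t`, `ξ = w_{t+1}`, `G = A + BK_t`, `b = Bl_t`,
and `P, ζ, d` (resp. `P', ζ', d'`) the coefficients at time `t` (resp. `t + 1`). -/
lemma integral_stageCost_eq_value_sub_value [IsProbabilityMeasure μ] {X ξ : Ω → ι → ℝ}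
    (hXξ : IndepFun X ξ μ) (hX : MemLp X 2 μ) (hξ : MemLp ξ 2 μ) {wbar : ι → ℝ}
    (hmean : ∫ ω, ξ ω ∂μ = wbar) {W : Matrix ι ι ℝ}
    (hcov : (of fun i j => ∫ ω, (ξ ω - wbar) i * (ξ ω - wbar) j ∂μ) = W)
    (G : Matrix ι ι ℝ) (b : ι → ℝ) {P P' C : Matrix ι ι ℝ} (hP' : P'.IsSymm)
    (hP : P = Gᵀ * P' * G + C) {ζ ζ' m : ι → ℝ}
    (hζ : ζ = Gᵀ *ᵥ ζ' + m + Gᵀ *ᵥ (P' *ᵥ (b + wbar))) {d d' : ℝ}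
    (hd : d = d' + trace ((P - C) * W) + 2 * (ζ' ⬝ᵥ (wbar + b))
      + (b + wbar) ⬝ᵥ (P' *ᵥ (b + wbar))) :
    ∫ ω, affineQuadratic C m 0 (G *ᵥ X ω + b + wbar) ∂μ
      = ∫ ω, affineQuadratic (P - C) (ζ - m) (d - trace ((P - C) * W)) (X ω) ∂μ
        - ∫ ω, affineQuadratic (P' - C) (ζ' - m) (d' - trace ((P' - C) * W))
            (G *ᵥ X ω + b + ξ ω) ∂μ := by
  set c := b + wbar
  have hS : P - C = Gᵀ * P' * G := by rw [hP, add_sub_cancel_right]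
  have hr : ζ - m = Gᵀ *ᵥ (ζ' + P' *ᵥ c) := by
    rw [hζ]; simp only [mulVec_add]; abel
  have he : d - trace ((P - C) * W) = d' + 2 * (ζ' ⬝ᵥ c) + c ⬝ᵥ (P' *ᵥ c) := by
    rw [hd, add_comm wbar]; ring
  have hY : MemLp (fun ω => G *ᵥ X ω + c) 2 μ := (hX.mulVec G).add (memLp_const c)
  have hδ : MemLp (fun ω => ξ ω - wbar) 2 μ := hξ.sub (memLp_const wbar)
  have hδ0 : ∫ ω, (ξ ω - wbar) ∂μ = 0 := by
    rw [integral_sub (hξ.integrable one_le_two) (integrable_const _), hmean, integral_const]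
    simp
  have hYδ : IndepFun (fun ω => G *ᵥ X ω + c) (fun ω => ξ ω - wbar) μ :=
    hXξ.comp (φ := fun y => G *ᵥ y + c) (ψ := fun v => v - wbar) (by fun_prop) (by fun_prop)
  have hnext : ∀ ω, G *ᵥ X ω + b + ξ ω = (G *ᵥ X ω + c) + (ξ ω - wbar) := fun ω => by
    simp only [c]; abel
  have hsplit : ∀ y, affineQuadratic (P' - C) (ζ' - m) d' y
      = affineQuadratic P' ζ' d' y - affineQuadratic C m 0 y := fun y => by
    rw [← affineQuadratic_sub, sub_zero]
  simp_rw [he, hS, hr, hnext]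
  rw [integral_affineQuadratic_add_of_indepFun hYδ hY hδ hδ0, hcov, sub_add_cancel]
  simp_rw [← affineQuadratic_comp_affine hP', hsplit]
  rw [integral_sub (integrable_affineQuadratic hY P' ζ' d') (integrable_affineQuadratic hY C m 0),
    sub_sub_cancel]
  simp only [c, add_assoc]

end

theorem stmt_17_general {n p : ℕ} {Ω : Type*} {m𝔉 : MeasurableSpace Ω}
    (P : Measure Ω) [IsProbabilityMeasure P]
    (A : Matrix (Fin n) (Fin n) ℝ) (B : Matrix (Fin n) (Fin p) ℝ)
    (Q : Matrix (Fin n) (Fin n) ℝ) (hQ : Q.IsSymm)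
    (N : ℕ) (x₀ : Fin n → ℝ)
    -- the deterministic feedback gains and affine terms
    (K : ℕ → Matrix (Fin p) (Fin n) ℝ) (l : ℕ → Fin p → ℝ)
    -- the i.i.d. process noise, with finite fourth moments
    (w : ℕ → Ω → Fin n → ℝ)
    (hwmeas : ∀ t, 1 ≤ t → t ≤ N → Measurable (w t))
    (hwid : ∀ t, 1 ≤ t → t ≤ N → Measure.map (w t) P = Measure.map (w 1) P)
    (hw4 : ∀ t, 1 ≤ t → t ≤ N → Integrable (fun ω => (∑ i, (w t ω i) ^ 2) ^ 2) P)
    (hindep : ∀ t, t < N →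
      Indep (MeasurableSpace.comap (w (t + 1)) inferInstance)
        (⨆ s ∈ Set.Icc 1 t, MeasurableSpace.comap (w s) inferInstance) P)
    -- noise statistics: mean, covariance and third-moment vector
    (wbar : Fin n → ℝ) (hwbar : wbar = fun i => ∫ ω, w 1 ω i ∂P)
    (W : Matrix (Fin n) (Fin n) ℝ)
    (hW : W = Matrix.of fun i j => ∫ ω, (w 1 ω i - wbar i) * (w 1 ω j - wbar j) ∂P)
    (m₃ : Fin n → ℝ)
    -- the closed-loop state process
    (x : ℕ → Ω → Fin n → ℝ)
    (hx0 : x 0 = fun _ => x₀)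
    (hxdyn : ∀ t, t < N →
      x (t + 1) = fun ω => (A + B * K t) *ᵥ x t ω + B *ᵥ l t + w (t + 1) ω)
    -- the one-step predictor `x̂_t = 𝔼[x_t|σ(w_1,…,w_{t−1})] = (A+BK_{t−1})x_{t−1}+Bl_{t−1}+w̄`
    (xhat : ℕ → Ω → Fin n → ℝ)
    (hxhat : ∀ t, 1 ≤ t → t ≤ N →
      xhat t = fun ω => (A + B * K (t - 1)) *ᵥ x (t - 1) ω + B *ᵥ l (t - 1) + wbar)
    -- the backward recursions of Proposition 3
    (Pm : ℕ → Matrix (Fin n) (Fin n) ℝ) (ζ : ℕ → Fin n → ℝ) (d : ℕ → ℝ)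
    (hPN : Pm N = (4 : ℝ) • (Q * W * Q))
    (hP : ∀ t, 1 ≤ t → t ≤ N →
      Pm (t - 1) = (A + B * K (t - 1))ᵀ * Pm t * (A + B * K (t - 1)) + (4 : ℝ) • (Q * W * Q))
    (hζN : ζ N = m₃)
    (hζ : ∀ t, 1 ≤ t → t ≤ N →
      ζ (t - 1) = (A + B * K (t - 1))ᵀ *ᵥ ζ t + m₃
        + (A + B * K (t - 1))ᵀ *ᵥ (Pm t *ᵥ (B *ᵥ l (t - 1) + wbar)))
    (hdN : d N = 0)
    (hd : ∀ t, 1 ≤ t → t ≤ N →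
      d (t - 1) = d t + Matrix.trace ((Pm (t - 1) - (4 : ℝ) • (Q * W * Q)) * W)
        + 2 * (ζ t ⬝ᵥ (wbar + B *ᵥ l (t - 1)))
        + (B *ᵥ l (t - 1) + wbar) ⬝ᵥ (Pm t *ᵥ (B *ᵥ l (t - 1) + wbar))) :
    -- the risk functional evaluation
    (∫ ω, ∑ t ∈ Finset.Icc 1 N,
        (4 * (xhat t ω ⬝ᵥ ((Q * W * Q) *ᵥ xhat t ω)) + 2 * (xhat t ω ⬝ᵥ m₃)) ∂P)
      = x₀ ⬝ᵥ ((Pm 0 - (4 : ℝ) • (Q * W * Q)) *ᵥ x₀)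
        + 2 * ((ζ 0 - m₃) ⬝ᵥ x₀)
        + d 0 - Matrix.trace ((Pm 0 - (4 : ℝ) • (Q * W * Q)) * W) := by
  set C := (4 : ℝ) • (Q * W * Q) with hC
  set V : ℕ → (Fin n → ℝ) → ℝ :=
    fun t => affineQuadratic (Pm t - C) (ζ t - m₃) (d t - trace ((Pm t - C) * W)) with hV
  have hCsymm : C.IsSymm := by
    have hWsymm : W.IsSymm := hW ▸ IsSymm.ext fun i j => by simp only [of_apply, mul_comm]
    simpa only [hQ.eq] using (hWsymm.transpose_mul_mul Q).smul (4 : ℝ)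
  have hP' : ∀ t < N, Pm t = (A + B * K t)ᵀ * Pm (t + 1) * (A + B * K t) + C := fun t ht => by
    have h := hP (t + 1) (by omega) ht; rwa [Nat.add_sub_cancel] at h
  have hwL2 : ∀ t, 1 ≤ t → t ≤ N → MemLp (w t) 2 P := fun t h1 h2 =>
    memLp_two_of_integrable_sq_sum_sq (hwmeas t h1 h2).aestronglyMeasurable (hw4 t h1 h2)
  have hxL2 : ∀ t ≤ N, MemLp (x t) 2 P := fun t ht =>
    memLp_of_affine_recursion (G := fun t => A + B * K t) hx0 hxdyn hwL2 ht
  have hstep : ∀ t < N, ∫ ω, affineQuadratic C m₃ 0 (xhat (t + 1) ω) ∂P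
      = ∫ ω, V t (x t ω) ∂P - ∫ ω, V (t + 1) (x (t + 1) ω) ∂P := by
    intro t ht
    have hident : IdentDistrib (w (t + 1)) (w 1) P P := ⟨(hwmeas _ (by omega) ht).aemeasurable,
      (hwmeas 1 le_rfl (by omega)).aemeasurable, hwid _ (by omega) ht⟩
    have hxw : IndepFun (x t) (w (t + 1)) P := (indep_of_indep_of_le_right (hindep t ht)
      (measurable_noiseHistory_of_affine_recursion hx0 hxdyn ht.le).comap_le).symm
    have hζt := hζ (t + 1) (by omega) ht
    have hdt := hd (t + 1) (by omega) ht
    have hxhatt := hxhat (t + 1) (by omega) ht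
    rw [Nat.add_sub_cancel] at hζt hdt hxhatt
    rw [hxhatt, hxdyn t ht]
    exact integral_stageCost_eq_value_sub_value hxw (hxL2 t ht.le) (hwL2 (t + 1) (by omega) ht)
      ((hident.integral_eq_pi ((hwL2 1 le_rfl (by omega)).integrable one_le_two)).trans
        hwbar.symm) ((hident.centered_covariance_eq wbar).trans hW.symm)
      (A + B * K t) (B *ᵥ l t) (isSymm_of_backward_recursion hCsymm (hPN ▸ hCsymm) hP' ht)
      (hP' t ht) hζt hdt
  have hcost : ∀ y, 4 * (y ⬝ᵥ ((Q * W * Q) *ᵥ y)) + 2 * (y ⬝ᵥ m₃) = affineQuadratic C m₃ 0 y :=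
    fun y => by
      simp only [affineQuadratic, hC, smul_mulVec, dotProduct_smul, smul_eq_mul,
        dotProduct_comm y m₃, add_zero]
  have hxhatL2 : ∀ t ∈ Finset.Icc 1 N, MemLp (xhat t) 2 P := fun t ht => by
    obtain ⟨h1, h2⟩ := Finset.mem_Icc.1 ht
    rw [hxhat t h1 h2]
    exact (((hxL2 (t - 1) (by omega)).mulVec (A + B * K (t - 1))).add
      (memLp_const (B *ᵥ l (t - 1)))).add (memLp_const wbar)
  simp only [hcost]
  rw [integral_finsetSum _ fun t ht => integrable_affineQuadratic (hxhatL2 t ht) _ _ _,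
    Finset.sum_Icc_one_eq_sub hstep]
  simp [hV, hx0, hPN, hζN, hdN, affineQuadratic]
  ring

/-- **Proposition 3 (Risk Functional Evaluation, fully-observed case).** Along an affine
state-feedback policy `u_t = K_t x_t + l_t`, the total expected predictive-variance risk
functional `J_R = 𝔼 Σ_{t=1}^N [4 x̂_t'QWQ x̂_t + 2 x̂_t'm₃]` admits the closed-form
backward-recursive expression
`J_R = x₀'(P₀ − 4QWQ)x₀ + 2(ζ₀ − m₃)'x₀ + d₀ − tr((P₀ − 4QWQ)W)`. -/
theorem stmt_17 {n p : ℕ} {Ω : Type*} {m𝔉 : MeasurableSpace Ω}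
    (P : Measure Ω) [IsProbabilityMeasure P]
    (A : Matrix (Fin n) (Fin n) ℝ) (B : Matrix (Fin n) (Fin p) ℝ)
    (Q : Matrix (Fin n) (Fin n) ℝ) (hQ : Q.IsSymm)
    (N : ℕ) (hN : 0 < N) (x₀ : Fin n → ℝ)
    -- the deterministic feedback gains and affine terms
    (K : ℕ → Matrix (Fin p) (Fin n) ℝ) (l : ℕ → Fin p → ℝ)
    -- the i.i.d. process noise, with finite fourth moments
    (w : ℕ → Ω → Fin n → ℝ)
    (hwmeas : ∀ t, 1 ≤ t → t ≤ N → Measurable (w t))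
    (hwid : ∀ t, 1 ≤ t → t ≤ N → Measure.map (w t) P = Measure.map (w 1) P)
    (hw4 : ∀ t, 1 ≤ t → t ≤ N → Integrable (fun ω => (∑ i, (w t ω i) ^ 2) ^ 2) P)
    (hindep : ∀ t, t < N →
      Indep (MeasurableSpace.comap (w (t + 1)) inferInstance)
        (⨆ s ∈ Set.Icc 1 t, MeasurableSpace.comap (w s) inferInstance) P)
    -- noise statistics: mean, covariance and third-moment vector
    (wbar : Fin n → ℝ) (hwbar : wbar = fun i => ∫ ω, w 1 ω i ∂P)
    (W : Matrix (Fin n) (Fin n) ℝ)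
    (hW : W = Matrix.of fun i j => ∫ ω, (w 1 ω i - wbar i) * (w 1 ω j - wbar j) ∂P)
    (m₃ : Fin n → ℝ)
    (hm₃ : m₃ = (2 : ℝ) • (Q *ᵥ fun i =>
      ∫ ω, (w 1 ω i - wbar i) * ((w 1 ω - wbar) ⬝ᵥ (Q *ᵥ (w 1 ω - wbar))) ∂P))
    -- the closed-loop state process
    (x : ℕ → Ω → Fin n → ℝ)
    (hx0 : x 0 = fun _ => x₀)
    (hxdyn : ∀ t, t < N →
      x (t + 1) = fun ω => (A + B * K t) *ᵥ x t ω + B *ᵥ l t + w (t + 1) ω)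
    -- the one-step predictor `x̂_t = 𝔼[x_t|σ(w_1,…,w_{t−1})] = (A+BK_{t−1})x_{t−1}+Bl_{t−1}+w̄`
    (xhat : ℕ → Ω → Fin n → ℝ)
    (hxhat : ∀ t, 1 ≤ t → t ≤ N →
      xhat t = fun ω => (A + B * K (t - 1)) *ᵥ x (t - 1) ω + B *ᵥ l (t - 1) + wbar)
    -- the backward recursions of Proposition 3
    (Pm : ℕ → Matrix (Fin n) (Fin n) ℝ) (ζ : ℕ → Fin n → ℝ) (d : ℕ → ℝ)
    (hPN : Pm N = (4 : ℝ) • (Q * W * Q))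
    (hP : ∀ t, 1 ≤ t → t ≤ N →
      Pm (t - 1) = (A + B * K (t - 1))ᵀ * Pm t * (A + B * K (t - 1)) + (4 : ℝ) • (Q * W * Q))
    (hζN : ζ N = m₃)
    (hζ : ∀ t, 1 ≤ t → t ≤ N →
      ζ (t - 1) = (A + B * K (t - 1))ᵀ *ᵥ ζ t + m₃
        + (A + B * K (t - 1))ᵀ *ᵥ (Pm t *ᵥ (B *ᵥ l (t - 1) + wbar)))
    (hdN : d N = 0)
    (hd : ∀ t, 1 ≤ t → t ≤ N →
      d (t - 1) = d t + Matrix.trace ((Pm (t - 1) - (4 : ℝ) • (Q * W * Q)) * W)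
        + 2 * (ζ t ⬝ᵥ (wbar + B *ᵥ l (t - 1)))
        + (B *ᵥ l (t - 1) + wbar) ⬝ᵥ (Pm t *ᵥ (B *ᵥ l (t - 1) + wbar))) :
    -- the risk functional evaluation
    (∫ ω, ∑ t ∈ Finset.Icc 1 N,
        (4 * (xhat t ω ⬝ᵥ ((Q * W * Q) *ᵥ xhat t ω)) + 2 * (xhat t ω ⬝ᵥ m₃)) ∂P)
      = x₀ ⬝ᵥ ((Pm 0 - (4 : ℝ) • (Q * W * Q)) *ᵥ x₀)
        + 2 * ((ζ 0 - m₃) ⬝ᵥ x₀)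
        + d 0 - Matrix.trace ((Pm 0 - (4 : ℝ) • (Q * W * Q)) * W) :=
  stmt_17_general (m𝔉 := m𝔉) P A B Q hQ N x₀ K l w hwmeas hwid hw4 hindep wbar hwbar W hW m₃ x hx0
    hxdyn xhat hxhat Pm ζ d hPN hP hζN hζ hdN hd
end
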